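/- arXiv:1407.7292 — 6 statements merged into one kernel-verified Lean document; each statement's English description precedes it below -/
import Mathlib

section
/- For every pair of positive integers k and c there exists an integer F = F(k,c) such that for every c-coloring of the powerset of any set X with |X| ≥ F, there exist pairwise disjoint nonempty subsets D_1, ..., D_k of X such that all unions ⋃_{i∈I} D_i over nonempty I ⊆ {1,...,k} receive the same color. -/
/-!
By Hindman's theorem some colour class of `m ↦ χ (binary digits of m)` contains all finite
sums of a sequence `b` of positive integers. Grouping `b` into blocks of consecutive indices whose
sums are divisible by a power of two exceeding all earlier block sums, the block sums have
pairwise disjoint binary digits, so a sum of block sums has as digits the union of theirs. The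
digit sets of the block sums thus form an infinite disjoint family all of whose finite unions
have the same colour.

If no bound `F` existed, pulling bad colourings of the subsets of `X n`, `n ≤ #(X n)`, back to
subsets of `ℕ` through `Fin n ↪ X n` and taking their limit along an ultrafilter would give a
colouring of `ℕ` for which the first `k` sets of such a family fail: only finitely many of their
unions matter, and on those the limit agrees with the `n`-th colouring for some large `n`.
-/

open Finset Function Filter Hindman

theorem exists_sum_Ico_dvd (b : ℕ → ℕ) (N d : ℕ) [NeZero d] :
    ∃ p q, N ≤ p ∧ p < q ∧ d ∣ ∑ i ∈ Ico p q, b i := by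
  obtain ⟨m, n, hmn, heq⟩ :=
    Finite.exists_ne_map_eq_of_infinite fun j => ((∑ i ∈ range (N + j), b i : ℕ) : ZMod d)
  wlog hlt : m < n generalizing m n
  · exact this n m hmn.symm heq.symm (by omega)
  refine ⟨N + m, N + n, by omega, by omega, (ZMod.natCast_eq_zero_iff _ _).1 ?_⟩
  have hsplit := congrArg (fun x : ℕ => (x : ZMod d))
    (sum_range_add_sum_Ico b (m := N + m) (n := N + n) (by omega))
  simp only [Nat.cast_add] at hsplit heq
  rw [← heq] at hsplit
  simpa using hsplit

theorem disjoint_equivBitIndices_of_lt_of_dvd {x y t : ℕ} (hx : x < 2 ^ t) (hy : 2 ^ t ∣ y) :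
    Disjoint (equivBitIndices x) (equivBitIndices y) := by
  obtain ⟨m, rfl⟩ := hy
  refine disjoint_left.2 fun i hix hiy => ?_
  simp only [equivBitIndices_apply, List.mem_toFinset, Nat.mem_bitIndices,
    Nat.testBit_two_pow_mul] at hix hiy
  have := Nat.ge_two_pow_of_testBit hix
  have := Nat.pow_le_pow_right two_pos (show t ≤ i by simp_all)
  omega

theorem equivBitIndices_sum_of_pairwiseDisjoint {ι : Type*} (J : Finset ι) (y : ι → ℕ)
    (h : (J : Set ι).PairwiseDisjoint fun j => equivBitIndices (y j)) :
    equivBitIndices (∑ j ∈ J, y j) = J.biUnion fun j => equivBitIndices (y j) := by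
  rw [← Equiv.eq_symm_apply, equivBitIndices_symm_apply, sum_biUnion h]
  exact sum_congr rfl fun j _ => (equivBitIndices.symm_apply_apply (y j)).symm

theorem exists_blocks_pairwiseDisjoint_bitIndices (b : ℕ → ℕ) :
    ∃ s : ℕ → Finset ℕ, (∀ j, (s j).Nonempty) ∧ Pairwise (Disjoint on s) ∧
      Pairwise (Disjoint on fun j => equivBitIndices (∑ i ∈ s j, b i)) := by
  let r (s t : Finset ℕ) : Prop :=
    Disjoint s t ∧ Disjoint (equivBitIndices (∑ i ∈ s, b i)) (equivBitIndices (∑ i ∈ t, b i))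
  have hnext (F : Finset (Finset ℕ)) : ∃ t : Finset ℕ, t.Nonempty ∧ ∀ s ∈ F, r s t := by
    obtain ⟨N, hN⟩ := (F.sup id).exists_nat_subset_range
    obtain ⟨p, q, hNp, hpq, hdvd⟩ := exists_sum_Ico_dvd b N (2 ^ F.sup fun s => ∑ i ∈ s, b i)
    refine ⟨Ico p q, nonempty_Ico.2 hpq, fun s hs =>
      ⟨?_, disjoint_equivBitIndices_of_lt_of_dvd ?_ hdvd⟩⟩
    · refine disjoint_left.2 fun i his hi => ?_
      have := mem_range.1 (hN (le_sup (f := id) hs his))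
      have := (mem_Ico.1 hi).1
      omega
    · exact (le_sup (f := fun s => ∑ i ∈ s, b i) hs).trans_lt Nat.lt_two_pow_self
  obtain ⟨s, hne, hr⟩ := exists_seq_of_forall_finset_exists _ r fun F _ => hnext F
  have hpair : Pairwise (r on s) := fun m n h =>
    h.lt_or_gt.elim (hr m n) fun h => (hr n m h).imp (fun h => h.symm) fun h => h.symm
  exact ⟨s, hne, fun m n h => (hpair h).1, fun m n h => (hpair h).2⟩

theorem Hindman.pos_of_mem_FS {a : Stream' ℕ} (ha : ∀ i, 0 < a.get i) {m : ℕ}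
    (hm : m ∈ FS a) : 0 < m := by
  induction hm with
  | head' a => exact ha 0
  | tail' a m _ ih => exact ih fun i => ha (i + 1)
  | cons' a m _ _ => exact Nat.add_pos_left (ha 0) m

theorem Hindman.exists_FS_subset_pos_mono {κ : Type*} [Finite κ] (f : ℕ → κ) :
    ∃ γ, ∃ b : Stream' ℕ, FS b ⊆ {m | 0 < m ∧ f m = γ} := by
  obtain ⟨_, ⟨γ, rfl⟩, b, hb⟩ := FS_partition_regular (fun _ => 1)
    (Set.range fun γ => {m | 0 < m ∧ f m = γ}) (Set.finite_range _)
    fun m hm => Set.mem_sUnion.2 ⟨_, ⟨f m, rfl⟩, pos_of_mem_FS (fun _ => one_pos) hm, rfl⟩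
  exact ⟨γ, b, hb⟩

theorem exists_pairwiseDisjoint_biUnion_mono {κ : Type*} [Finite κ] (χ : Finset ℕ → κ) :
    ∃ D : ℕ → Finset ℕ, (∀ j, (D j).Nonempty) ∧ Pairwise (Disjoint on D) ∧
      ∃ γ, ∀ J : Finset ℕ, J.Nonempty → χ (J.biUnion D) = γ := by
  obtain ⟨γ, b, hb⟩ := exists_FS_subset_pos_mono (χ ∘ equivBitIndices)
  obtain ⟨s, hs, hdisj, hbits⟩ := exists_blocks_pairwiseDisjoint_bitIndices b.get
  have hmem (J : Finset ℕ) (hJ : J.Nonempty) : ∑ j ∈ J, ∑ i ∈ s j, b.get i ∈ FS b := by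
    rw [← sum_biUnion (hdisj.set_pairwise _)]
    exact FS.finsetSum b _ (hJ.biUnion fun j _ => hs j)
  refine ⟨fun j => equivBitIndices (∑ i ∈ s j, b.get i), fun j => ?_, hbits, γ, fun J hJ => ?_⟩
  · have hpos := (hb (by simpa using hmem {j} (singleton_nonempty j))).1
    exact nonempty_iff_ne_empty.2 fun h => hpos.ne' (by simpa using congrArg equivBitIndices.symm h)
  · rw [← equivBitIndices_sum_of_pairwiseDisjoint J _ (hbits.set_pairwise _)]
    exact (hb (hmem J hJ)).2

theorem exists_fin_pairwiseDisjoint_iUnion_mono {κ : Type*} [Finite κ] (χ : Set ℕ → κ) (k : ℕ) :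
    ∃ D : Fin k → Finset ℕ, (∀ i, (D i).Nonempty) ∧ Pairwise (Disjoint on D) ∧
      ∃ γ, ∀ I : Set (Fin k), I.Nonempty → χ (⋃ i ∈ I, (D i : Set ℕ)) = γ := by
  obtain ⟨D, hne, hdisj, γ, hγ⟩ := exists_pairwiseDisjoint_biUnion_mono fun S : Finset ℕ => χ S
  refine ⟨fun i => D i, fun i => hne i, hdisj.comp_of_injective Fin.val_injective, γ,
    fun I hI => ?_⟩
  classical
  have := hγ (I.toFinset.image Fin.val) (by simpa using hI)
  rwa [coe_biUnion, coe_image, Set.biUnion_image, Set.coe_toFinset] at this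

theorem Ultrafilter.exists_forall_eventually_eq {ι α κ : Type*} [Finite κ] (U : Ultrafilter ι)
    (f : ι → α → κ) : ∃ g : α → κ, ∀ a, ∀ᶠ i in U, f i a = g a := by
  choose g hg using fun a => (U.map (f · a)).eq_pure_of_finite
  exact ⟨g, fun a => show {g a} ∈ U.map (f · a) by rw [hg a]; exact Set.mem_singleton _⟩

theorem stmt0_general (k c : ℕ) :
    ∃ F : ℕ, ∀ (X : Type) (χ : Set X → Fin c), (F : Cardinal) ≤ Cardinal.mk X →
      ∃ D : Fin k → Set X,
        (∀ i, (D i).Nonempty) ∧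
        (Pairwise fun i j => Disjoint (D i) (D j)) ∧
        ∃ γ : Fin c, ∀ I : Set (Fin k), I.Nonempty → χ (⋃ i ∈ I, D i) = γ := by
  by_contra! hbad
  choose X χ hX hbad using hbad
  have g (n : ℕ) : Fin n ↪ X n := ((Cardinal.le_def _ _).1 (by simpa using hX n)).some
  let φ (n : ℕ) (S : Set ℕ) : Set (X n) := g n '' (Fin.val ⁻¹' S)
  obtain ⟨χ₀, hχ₀⟩ := (Ultrafilter.of (atTop : Filter ℕ)).exists_forall_eventually_eq
    fun n S => χ n (φ n S)
  obtain ⟨D, hne, hdisj, γ, hγ⟩ := exists_fin_pairwiseDisjoint_iUnion_mono χ₀ k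
  obtain ⟨N, hN⟩ := (univ.sup D).exists_nat_subset_range
  obtain ⟨n, hNn, hagree⟩ := (((eventually_ge_atTop N).filter_mono (Ultrafilter.of_le _)).and
    (eventually_all.2 fun I : Set (Fin k) => hχ₀ (⋃ i ∈ I, (D i : Set ℕ)))).exists
  have hD (i : Fin k) : (D i : Set ℕ) ⊆ Set.range (Fin.val : Fin n → ℕ) := fun x hx =>
    ⟨⟨x, (mem_range.1 (hN (le_sup (f := D) (mem_univ i) hx))).trans_le hNn⟩, rfl⟩
  obtain ⟨I, hI, hχI⟩ := hbad n (fun i => φ n (D i))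
    (fun i => ((coe_nonempty.2 (hne i)).preimage' (hD i)).image _)
    (fun i j h =>
      (Set.disjoint_image_iff (g n).injective).2 ((disjoint_coe.2 (hdisj h)).preimage _)) γ
  refine hχI ?_
  rw [← hγ I hI, ← hagree I]
  simp only [φ, Set.preimage_iUnion₂, Set.image_iUnion₂]

/-- **Folkman's theorem (finite disjoint union theorem).** For every pair of positive
integers `k` and `c` there is an integer `F` such that for every `c`-coloring of the
powerset of any set `X` of cardinality at least `F`, there are pairwise disjoint nonempty
subsets `D 1, ..., D k` of `X` all of whose unions over nonempty index sets get the
same color. -/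
theorem stmt0 (k c : ℕ) (hk : 0 < k) (hc : 0 < c) :
    ∃ F : ℕ, ∀ (X : Type) (χ : Set X → Fin c), (F : Cardinal) ≤ Cardinal.mk X →
      ∃ D : Fin k → Set X,
        (∀ i, (D i).Nonempty) ∧
        (Pairwise fun i j => Disjoint (D i) (D j)) ∧
        ∃ γ : Fin c, ∀ I : Set (Fin k), I.Nonempty → χ (⋃ i ∈ I, D i) = γ :=
  stmt0_general k c
end

section
/- For all positive integers k and r there exists a positive integer N₀ such that for every N ≥ N₀, every alphabet Λ with k letters, and every r-coloring of Λ^N, there exists a variable word w(v) of length N over Λ such that the combinatorial line {w(α) : α ∈ Λ} is monochromatic. -/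
/-- **Hales–Jewett theorem.** A variable word of length `N` over `Λ` is modelled as a
function `w : Fin N → Option Λ`, where `none` marks an occurrence of the variable `v`
(which must occur at least once); `w(α)` is obtained by substituting `α` for `v`. -/
theorem stmt1 (k r : ℕ) (hk : 0 < k) (hr : 0 < r) :
    ∃ N₀ : ℕ, 0 < N₀ ∧
      ∀ N : ℕ, N₀ ≤ N →
        ∀ (Λ : Type) (_ : Fintype Λ), Fintype.card Λ = k →
          ∀ χ : (Fin N → Λ) → Fin r,
            ∃ w : Fin N → Option Λ,
              (∃ i, w i = none) ∧
              ∃ γ : Fin r, ∀ α : Λ, χ (fun i => (w i).getD α) = γ := by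
  obtain ⟨ι, ιfin, hι⟩ := Combinatorics.Line.exists_mono_in_high_dimension (Fin k) (Fin r)
  refine ⟨max (Fintype.card ι) 1, lt_of_lt_of_le one_pos (le_max_right _ _), ?_⟩
  intro N hN Λ _ hcard χ
  have e : Λ ≃ Fin k := Fintype.equivFinOfCardEq hcard
  have e' : ι ≃ Fin (Fintype.card ι) := Fintype.equivFin ι
  have hιN : Fintype.card ι ≤ N := le_trans (le_max_left _ _) hN
  have a : Λ := e.symm ⟨0, hk⟩
  set C : (ι → Fin k) → Fin r := fun x =>
    χ (fun j : Fin N => if h : j.val < Fintype.card ι then e.symm (x (e'.symm ⟨j, h⟩)) else a)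
    with hC
  obtain ⟨l, γ, hγ⟩ := hι C
  refine ⟨fun j => if h : j.val < Fintype.card ι then
      (l.idxFun (e'.symm ⟨j, h⟩)).map e.symm else some a, ?_, γ, ?_⟩
  · obtain ⟨i, hi⟩ := l.proper
    refine ⟨⟨e' i, lt_of_lt_of_le (e' i).isLt hιN⟩, ?_⟩
    simp [hi]
  · intro α
    have := hγ (e α)
    rw [hC] at this
    convert this using 2
    funext j
    by_cases h : j.val < Fintype.card ι
    · simp only [h, dif_pos]
      cases hx : l.idxFun (e'.symm ⟨j, h⟩) <;>
        simp [Combinatorics.Line.coe_apply, hx]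
    · simp [h]
end

section
/- Let Λ be a finite alphabet, T a vector tree of infinite height, ℓ a non-negative integer, X an ℓ-subspace, and E ⊆ W(ℓ) a set large in X. If E = E₁ ∪ ... ∪ E_r is a finite partition of E, then there exist an index i₀ ∈ {1,...,r} and an ℓ-subspace Y ≤ X such that E_{i₀} is large in Y. -/
set_option autoImplicit false

/-- A rooted, finitely branching, balanced tree of height `ω` with no maximal nodes,
modelled as a prefix-closed collection of finite sequences of natural numbers. -/
structure TreeT where
  mem : List ℕ → Prop
  root : mem []
  pref : ∀ s n, mem (s ++ [n]) → mem s
  finBranch : ∀ s, mem s → {n : ℕ | mem (s ++ [n])}.Finite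
  noMax : ∀ s, mem s → ∃ n, mem (s ++ [n])

variable {d : ℕ}

/-- Membership in the level product of a vector tree: all coordinates are nodes of the
respective trees and lie on a common level. -/
def InLP (V : Fin (d + 1) → TreeT) (t : Fin (d + 1) → List ℕ) : Prop :=
  (∀ i, (V i).mem (t i)) ∧ ∀ i, (t i).length = (t 0).length

/-- The level product `⊗T` of a vector tree. -/
def LP (V : Fin (d + 1) → TreeT) : Type :=
  {t : Fin (d + 1) → List ℕ // InLP V t}

/-- The level of an element of the level product. -/
def lev {V : Fin (d + 1) → TreeT} (t : LP V) : ℕ := (t.1 0).length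

/-- The coordinatewise (prefix) ordering on the level product. -/
def lpLE {V : Fin (d + 1) → TreeT} (t s : LP V) : Prop :=
  ∀ i, t.1 i <+: s.1 i

/-- The level set of a subset of the level product. -/
def levSet {V : Fin (d + 1) → TreeT} (A : Set (LP V)) : Set ℕ := lev '' A

/-- `t` is the minimum of `W` in the ordering of the level product. -/
def isMinOf {V : Fin (d + 1) → TreeT} (t : LP V) (W : Set (LP V)) : Prop :=
  t ∈ W ∧ ∀ s ∈ W, lpLE t s

/-- A (partial) word over the alphabet `Λ` on the level product: `some (.inl a)` is the
letter `a`, `some (.inr s)` is an occurrence of the variable `v_s`, and `none` means the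
point is outside the domain of the word. -/
abbrev WordFun (Λ : Type) {d : ℕ} (V : Fin (d + 1) → TreeT) : Type :=
  LP V → Option (Λ ⊕ LP V)

variable {Λ : Type} {d : ℕ} {V : Fin (d + 1) → TreeT}

/-- The set of variables occurring in a word. -/
def Vars (f : WordFun Λ V) : Set (LP V) := {s | ∃ t, f t = some (Sum.inr s)}

/-- The occurrence set of the variable `v_s` in `f`. -/
def occSet (f : WordFun Λ V) (s : LP V) : Set (LP V) := {t | f t = some (Sum.inr s)}

/-- `f` is a word on the interval of levels `[m, n)` of the level product. -/
def IsWordOn (f : WordFun Λ V) (m n : ℕ) : Prop :=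
  ∀ t, (f t).isSome ↔ (m ≤ lev t ∧ lev t < n)

/-- `f` is a constant word (no variables occur). -/
def IsConst (f : WordFun Λ V) : Prop := ∀ t s, f t ≠ some (Sum.inr s)

/-- `W(ℓ)`: the constant words `f` with `f = ∅` or `bt f = ℓ`. -/
def Wl (Λ : Type) {d : ℕ} (V : Fin (d + 1) → TreeT) (ℓ : ℕ) : Set (WordFun Λ V) :=
  {f | IsConst f ∧ ∃ n, IsWordOn f ℓ n}

/-- `f` is a variable word on `⊗T↾[m,n)`: its set of variables is the (nonempty) level
product of a vector level subset `ws(f)` of `T` (a "rectangular" set of points on a common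
level), each variable's occurrence set admits that variable's index as its minimum, and all
occurrence sets share a common level set. -/
def IsVWord (f : WordFun Λ V) (m n : ℕ) : Prop :=
  IsWordOn f m n ∧
  (Vars f).Nonempty ∧
  (∀ s ∈ Vars f, ∀ s' ∈ Vars f, lev s = lev s') ∧
  (∀ s ∈ Vars f, ∀ s' ∈ Vars f, ∀ i₀ : Fin (d + 1),
    ∃ s'' ∈ Vars f, (∀ i, i ≠ i₀ → s''.1 i = s.1 i) ∧ s''.1 i₀ = s'.1 i₀) ∧
  (∀ s ∈ Vars f, s ∈ occSet f s ∧ ∀ t ∈ occSet f s, lpLE s t) ∧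
  (∀ s ∈ Vars f, ∀ s' ∈ Vars f, levSet (occSet f s) = levSet (occSet f s'))

/-- The (componentwise) projections of `A` dominate the `k`-th level of the vector tree:
every node of `T_i(k)` has a successor among the `i`-th coordinates of members of `A`. -/
def DominatesLevel {d : ℕ} (V : Fin (d + 1) → TreeT) (A : Set (LP V)) (k : ℕ) : Prop :=
  ∀ i : Fin (d + 1), ∀ u : List ℕ, (V i).mem u → u.length = k → ∃ s ∈ A, u <+: s.1 i

/-- Substituting the letters prescribed by `a` for the variables of `f`. -/
def substW (f : WordFun Λ V) (a : LP V → Λ) : WordFun Λ V :=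
  fun t => (f t).map (Sum.elim Sum.inl (fun s => Sum.inl (a s)))

/-- The span `[f]_Λ` of a single variable word: all its substitution instances. -/
def spanWord (f : WordFun Λ V) : Set (WordFun Λ V) := {g | ∃ a : LP V → Λ, g = substW f a}

/-- The union of the words `h 0, ..., h (q-1)` (with pairwise disjoint domains). -/
def unionMany (h : ℕ → WordFun Λ V) (q : ℕ) : WordFun Λ V :=
  fun t => (List.range q).findSome? (fun i => h i t)

/-- The union of two words with disjoint domains. -/
def wunion (f g : WordFun Λ V) : WordFun Λ V :=
  fun t => match f t with
  | some x => some x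
  | none => g t

/-- The span of the finite initial segment `F 0, ..., F (q-1)`:
all unions of substitution instances. -/
def spanFin (F : ℕ → WordFun Λ V) (q : ℕ) : Set (WordFun Λ V) :=
  {g | ∃ h : ℕ → WordFun Λ V, (∀ i, i < q → h i ∈ spanWord (F i)) ∧ g = unionMany h q}

/-- The span `[X]_Λ` of an infinite sequence of words. -/
def spanSeq (F : ℕ → WordFun Λ V) : Set (WordFun Λ V) :=
  ⋃ q ∈ {q : ℕ | 0 < q}, spanFin F q

/-- A `(k, ℓ)`-subspace: an infinite compatible sequence of variable words, the `i`-th one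
living on `[e i, e (i+1))` with `e 0 = ℓ`, whose variable supports `ws(f_i)` dominate
`T(k + i)`.  An `ℓ`-subspace is a `(k, ℓ)`-subspace for some `k`, and a subspace is a
`(0, 0)`-subspace. -/
structure SubspaceS (Λ : Type) {d : ℕ} (V : Fin (d + 1) → TreeT) (k ℓ : ℕ) where
  F : ℕ → WordFun Λ V
  e : ℕ → ℕ
  e0 : e 0 = ℓ
  vword : ∀ i, IsVWord (F i) (e i) (e (i + 1))
  dom : ∀ i, DominatesLevel V (Vars (F i)) (k + i)

/-- The tail of a subspace past its first `q` words: a `(k+q, e q)`-subspace. -/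
def SubspaceS.tail {k ℓ : ℕ} (X : SubspaceS Λ V k ℓ) (q : ℕ) :
    SubspaceS Λ V (k + q) (X.e q) where
  F := fun i => X.F (q + i)
  e := fun i => X.e (q + i)
  e0 := rfl
  vword := fun i => X.vword (q + i)
  dom := fun i => by simpa [Nat.add_assoc] using X.dom (q + i)

/-- `E ⊆ W(ℓ)` is large in the `ℓ`-subspace `X`: `E` meets the span of every further
`ℓ`-subspace of `X`. -/
def LargeIn {k ℓ : ℕ} (E : Set (WordFun Λ V)) (X : SubspaceS Λ V k ℓ) : Prop :=
  ∀ (k' : ℕ) (Y : SubspaceS Λ V k' ℓ),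
    spanSeq Y.F ⊆ spanSeq X.F → (E ∩ spanSeq Y.F).Nonempty

/-- **Largeness has a mild Ramsey property:** if `E ⊆ W(ℓ)` is large in the `ℓ`-subspace
`X` and `E = E₁ ∪ ... ∪ E_r` is a finite partition of `E`, then some `E_{i₀}` is large in
some further `ℓ`-subspace `Y ≤ X`. -/
theorem stmt5 {d : ℕ} (Λ : Type) [Finite Λ] (V : Fin (d + 1) → TreeT)
    (ℓ k : ℕ) (X : SubspaceS Λ V k ℓ)
    (E : Set (WordFun Λ V)) (hEW : E ⊆ Wl Λ V ℓ) (hE : LargeIn E X)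
    (r : ℕ) (hr : 0 < r) (Es : Fin r → Set (WordFun Λ V))
    (hcover : E = ⋃ i, Es i)
    (hdisj : Pairwise fun i j => Disjoint (Es i) (Es j)) :
    ∃ (i₀ : Fin r) (k' : ℕ) (Y : SubspaceS Λ V k' ℓ),
      spanSeq Y.F ⊆ spanSeq X.F ∧ LargeIn (Es i₀) Y := by
  by_contra hc
  push_neg at hc
  have key : ∀ n, n ≤ r → ∃ (k' : ℕ) (Y : SubspaceS Λ V k' ℓ),
      spanSeq Y.F ⊆ spanSeq X.F ∧ ∀ i : Fin r, (i : ℕ) < n → Es i ∩ spanSeq Y.F = ∅ := by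
    intro n
    induction n with
    | zero => exact fun _ => ⟨k, X, subset_rfl, fun i hi => absurd hi (Nat.not_lt_zero _)⟩
    | succ n ih =>
      intro hn
      obtain ⟨k', Y, hYX, hY⟩ := ih (Nat.le_of_succ_le hn)
      have hnl := hc ⟨n, hn⟩ k' Y hYX
      rw [LargeIn] at hnl
      push_neg at hnl
      obtain ⟨k'', Z, hZY, hZ⟩ := hnl
      refine ⟨k'', Z, hZY.trans hYX, fun i hi => ?_⟩
      rcases Nat.lt_succ_iff_lt_or_eq.mp hi with h' | h'
      · exact Set.eq_empty_of_subset_empty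
          ((hY i h') ▸ Set.inter_subset_inter_right _ hZY)
      · have hieq : i = ⟨n, hn⟩ := Fin.ext h'
        rw [hieq]
        exact hZ
  obtain ⟨k', Y, hYX, hY⟩ := key r le_rfl
  obtain ⟨f, hfE, hfY⟩ := hE k' Y hYX
  rw [hcover] at hfE
  obtain ⟨_, ⟨i, rfl⟩, hfi⟩ := hfE
  exact Set.eq_empty_iff_forall_notMem.mp (hY i i.2) f ⟨hfi, hfY⟩
end

section
/- Let Λ be a finite alphabet, T a vector tree of infinite height, k and ℓ non-negative integers, X an ℓ-subspace, and E ⊆ W(ℓ) large in X. Then there exists a variable word f such that [f]_Λ ⊆ E ∩ [X]_Λ and the vector level subset ws(f) dominates T(k). -/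
set_option autoImplicit false

variable {d : ℕ}

variable {Λ : Type} {d : ℕ} {V : Fin (d + 1) → TreeT}

/-!
Suppose no such word exists; we build an `ℓ`-subspace `Y` of `X` whose span misses `E`,
contradicting largeness. The words of `Y` are chosen one at a time. If `W` is the finite span of
the words chosen so far, go far out along `X` and take blocks `j₀ < blk 1 < ⋯ < blk (N - 1)` with
coordinatewise lifts of the variables of block `j₀` into each of them, so that points of the cube
`Fin N → (Vars (X.F j₀) → Λ)` parametrise words on these blocks. Colour a point by the set of
`w ∈ W` it completes into `E` and take a monochromatic combinatorial line (Hales–Jewett).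
Identifying the variables along the moving coordinates of the line gives a variable word `g`
whose instances are the points of the line, and whose variables dominate any prescribed level.
If the colour of the line contains some `w`, then `w ∪ g` is a word we assumed not to exist; so
no `w ∪ g[α]` lies in `E`, and `g` is the next word of `Y`.
-/

namespace TreeT

lemma exists_extension (T : TreeT) {u : List ℕ} (hu : T.mem u) {L : ℕ} (hL : u.length ≤ L) :
    ∃ v, T.mem v ∧ v.length = L ∧ u <+: v := by
  induction L, hL using Nat.le_induction with
  | base => exact ⟨u, hu, rfl, List.prefix_refl u⟩
  | succ L _ ih =>
    obtain ⟨v, hv, rfl, huv⟩ := ih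
    obtain ⟨n, hn⟩ := T.noMax v hv
    exact ⟨v ++ [n], hn, by simp, huv.trans (List.prefix_append v [n])⟩

lemma level_finite (T : TreeT) (L : ℕ) : {u : List ℕ | T.mem u ∧ u.length = L}.Finite := by
  induction L with
  | zero =>
    refine (Set.finite_singleton []).subset ?_
    rintro u ⟨-, hu⟩
    simpa using hu
  | succ L ih =>
    refine (ih.biUnion fun v hv => (T.finBranch v hv.1).image (fun n => v ++ [n])).subset ?_
    rintro u ⟨hu, hl⟩
    have hne : u ≠ [] := by rintro rfl; simp at hl
    rw [← List.dropLast_append_getLast hne] at hu ⊢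
    exact Set.mem_biUnion ⟨T.pref _ _ hu, by simp [hl]⟩ ⟨_, hu, rfl⟩

end TreeT

lemma length_coord (s : LP V) (i : Fin (d + 1)) : (s.1 i).length = lev s := s.2.2 i

lemma lpLE_refl (s : LP V) : lpLE s s := fun _ => List.prefix_refl _

lemma lpLE.trans {a b c : LP V} (h : lpLE a b) (h' : lpLE b c) : lpLE a c :=
  fun i => (h i).trans (h' i)

lemma lpLE.lev_le {a b : LP V} (h : lpLE a b) : lev a ≤ lev b := (h 0).length_le

lemma eq_of_lpLE_of_lev_eq {a b c : LP V} (ha : lpLE a c) (hb : lpLE b c) (hl : lev a = lev b) :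
    a = b :=
  Subtype.ext <| funext fun i => by
    have hlen : (a.1 i).length = (b.1 i).length := by rw [length_coord, length_coord, hl]
    exact (List.prefix_of_prefix_length_le (ha i) (hb i) hlen.le).eq_of_length hlen

lemma LP.level_finite (V : Fin (d + 1) → TreeT) (L : ℕ) : {s : LP V | lev s = L}.Finite := by
  refine Set.Finite.of_finite_image (f := Subtype.val) ?_ Subtype.val_injective.injOn
  refine (Set.Finite.pi fun i => (V i).level_finite L).subset ?_
  rintro _ ⟨s, hs, rfl⟩ i -
  exact ⟨s.2.1 i, (length_coord s i).trans hs⟩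

lemma DominatesLevel.mono {A : Set (LP V)} {K k : ℕ} (h : DominatesLevel V A K) (hk : k ≤ K) :
    DominatesLevel V A k := by
  intro i u hu hlen
  obtain ⟨v, hv, hvl, huv⟩ := (V i).exists_extension hu (hlen.trans_le hk)
  obtain ⟨s, hs, hvs⟩ := h i v hv hvl
  exact ⟨s, hs, huv.trans hvs⟩

def relabel (ρ : LP V → Λ ⊕ LP V) (f : WordFun Λ V) : WordFun Λ V :=
  fun t => (f t).map (Sum.elim Sum.inl ρ)

def restrictFrom (c : ℕ) (f : WordFun Λ V) : WordFun Λ V :=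
  fun t => if c ≤ lev t then f t else none

lemma substW_eq_relabel (f : WordFun Λ V) (a : LP V → Λ) :
    substW f a = relabel (Sum.inl ∘ a) f := rfl

lemma relabel_isSome (ρ : LP V → Λ ⊕ LP V) (f : WordFun Λ V) (t : LP V) :
    (relabel ρ f t).isSome = (f t).isSome := by
  simp [relabel]

lemma relabel_eq_inr {ρ : LP V → Λ ⊕ LP V} {f : WordFun Λ V} {t r : LP V} :
    relabel ρ f t = some (Sum.inr r) ↔ ∃ s, f t = some (Sum.inr s) ∧ ρ s = Sum.inr r := by
  simp only [relabel]
  rcases f t with _ | _ | s <;> simp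

lemma relabel_relabel (ρ ρ' : LP V → Λ ⊕ LP V) (f : WordFun Λ V) :
    relabel ρ' (relabel ρ f) = relabel (Sum.elim Sum.inl ρ' ∘ ρ) f := by
  funext t
  simp only [relabel]
  rcases f t with _ | _ | s <;> rfl

lemma relabel_restrictFrom (ρ : LP V → Λ ⊕ LP V) (c : ℕ) (f : WordFun Λ V) :
    relabel ρ (restrictFrom c f) = restrictFrom c (relabel ρ f) := by
  funext t
  simp only [relabel, restrictFrom]
  split_ifs <;> rfl

lemma restrictFrom_isSome (c : ℕ) (f : WordFun Λ V) (t : LP V) :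
    (restrictFrom c f t).isSome ↔ c ≤ lev t ∧ (f t).isSome := by
  simp only [restrictFrom]
  split_ifs with h <;> simp [h]

lemma substW_isConst (f : WordFun Λ V) (a : LP V → Λ) : IsConst (substW f a) := by
  intro t s
  simp only [substW]
  rcases f t with _ | _ | _ <;> simp

lemma substW_apply_congr {f : WordFun Λ V} {a a' : LP V → Λ} {t : LP V}
    (h : ∀ s, f t = some (Sum.inr s) → a s = a' s) : substW f a t = substW f a' t := by
  simp only [substW]
  rcases hf : f t with _ | _ | s
  · rfl
  · rfl
  · simp [h s hf]

lemma substW_of_isConst {f : WordFun Λ V} (h : IsConst f) (a : LP V → Λ) : substW f a = f := by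
  funext t
  simp only [substW]
  rcases hf : f t with _ | _ | s
  · rfl
  · rfl
  · exact absurd hf (h t s)

lemma wunion_isSome (f g : WordFun Λ V) (t : LP V) :
    (wunion f g t).isSome = ((f t).isSome || (g t).isSome) := by
  simp only [wunion]
  rcases f t <;> simp

lemma wunion_of_eq_none {f : WordFun Λ V} {t : LP V} (g : WordFun Λ V) (h : f t = none) :
    wunion f g t = g t := by
  simp [wunion, h]

lemma wunion_of_eq_none_right (f : WordFun Λ V) {g : WordFun Λ V} {t : LP V} (h : g t = none) :
    wunion f g t = f t := by
  simp only [wunion]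
  rcases f t <;> simp [h]

lemma substW_wunion (f g : WordFun Λ V) (a : LP V → Λ) :
    substW (wunion f g) a = wunion (substW f a) (substW g a) := by
  funext t
  simp only [substW, wunion]
  rcases f t <;> rfl

lemma unionMany_succ (h : ℕ → WordFun Λ V) (q : ℕ) :
    unionMany h (q + 1) = wunion (unionMany h q) (h q) := by
  funext t
  simp only [unionMany, wunion, List.range_succ, List.findSome?_append]
  rcases List.findSome? (fun i => h i t) (List.range q) <;> simp [List.findSome?_cons]
  cases h q t <;> rfl

lemma unionMany_apply_eq_none {h : ℕ → WordFun Λ V} {q : ℕ} {t : LP V}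
    (hn : ∀ i < q, h i t = none) : unionMany h q t = none :=
  List.findSome?_eq_none_iff.2 fun i hi => hn i (List.mem_range.1 hi)

lemma unionMany_apply_of_unique {h : ℕ → WordFun Λ V} {q j : ℕ} {t : LP V} (hj : j < q)
    (hn : ∀ i < q, i ≠ j → h i t = none) : unionMany h q t = h j t := by
  induction q with
  | zero => omega
  | succ q ih =>
    rw [unionMany_succ]
    rcases (Nat.lt_succ_iff.1 hj).lt_or_eq with hj | rfl
    · rw [wunion_of_eq_none_right _ (hn q q.lt_succ_self hj.ne'),
        ih hj fun i hi hij => hn i (by omega) hij]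
    · exact wunion_of_eq_none _ (unionMany_apply_eq_none fun i hi => hn i (by omega) hi.ne)

lemma substW_unionMany (h : ℕ → WordFun Λ V) (q : ℕ) (a : LP V → Λ) :
    substW (unionMany h q) a = unionMany (fun j => substW (h j) a) q := by
  induction q with
  | zero => rfl
  | succ q ih => rw [unionMany_succ, unionMany_succ, substW_wunion, ih]

lemma unionMany_congr {h h' : ℕ → WordFun Λ V} {q : ℕ} (he : ∀ i < q, h i = h' i) :
    unionMany h q = unionMany h' q := by
  induction q with
  | zero => rfl
  | succ q ih =>
    rw [unionMany_succ, unionMany_succ, he q q.lt_succ_self, ih fun i hi => he i (by omega)]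

lemma vars_eq_of_occSet_eq {f g : WordFun Λ V} (h : ∀ s, occSet f s = occSet g s) :
    Vars f = Vars g :=
  Set.ext fun s => exists_congr fun t => Set.ext_iff.1 (h s) t

namespace IsVWord

variable {f : WordFun Λ V} {m n : ℕ}

lemma isWordOn (hf : IsVWord f m n) : IsWordOn f m n := hf.1

lemma vars_nonempty (hf : IsVWord f m n) : (Vars f).Nonempty := hf.2.1

lemma lev_eq (hf : IsVWord f m n) {s s' : LP V} (hs : s ∈ Vars f) (hs' : s' ∈ Vars f) :
    lev s = lev s' :=
  hf.2.2.1 s hs s' hs'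

lemma self_mem_occSet (hf : IsVWord f m n) {s : LP V} (hs : s ∈ Vars f) : s ∈ occSet f s :=
  (hf.2.2.2.2.1 s hs).1

lemma lpLE_of_mem_occSet (hf : IsVWord f m n) {s t : LP V} (hs : s ∈ Vars f)
    (ht : t ∈ occSet f s) : lpLE s t :=
  (hf.2.2.2.2.1 s hs).2 t ht

lemma levSet_occSet_eq (hf : IsVWord f m n) {s s' : LP V} (hs : s ∈ Vars f)
    (hs' : s' ∈ Vars f) : levSet (occSet f s) = levSet (occSet f s') :=
  hf.2.2.2.2.2 s hs s' hs'

lemma lev_mem_Ico (hf : IsVWord f m n) {s : LP V} (hs : s ∈ Vars f) : m ≤ lev s ∧ lev s < n :=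
  (hf.isWordOn s).1 (by rw [hf.self_mem_occSet hs]; rfl)

lemma lt (hf : IsVWord f m n) : m < n := by
  obtain ⟨s, hs⟩ := hf.vars_nonempty
  have := hf.lev_mem_Ico hs
  omega

lemma exists_mem_vars_of_coords (hf : IsVWord f m n) (x : Fin (d + 1) → List ℕ)
    (hx : ∀ i, ∃ s ∈ Vars f, x i = s.1 i) : ∃ s ∈ Vars f, s.1 = x := by
  obtain ⟨s₀, hs₀⟩ := hf.vars_nonempty
  suffices h : ∀ N ≤ d + 1, ∃ s ∈ Vars f, ∀ i : Fin (d + 1), (i : ℕ) < N → s.1 i = x i by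
    obtain ⟨s, hs, hsx⟩ := h (d + 1) le_rfl
    exact ⟨s, hs, funext fun i => hsx i i.isLt⟩
  intro N
  induction N with
  | zero => exact fun _ => ⟨s₀, hs₀, fun i hi => absurd hi (Nat.not_lt_zero _)⟩
  | succ N ih =>
    intro hN
    obtain ⟨s, hs, hsx⟩ := ih (by omega)
    obtain ⟨w, hw, hwx⟩ := hx ⟨N, hN⟩
    obtain ⟨s', hs', hrest, hN'⟩ := hf.2.2.2.1 s hs w hw ⟨N, hN⟩
    refine ⟨s', hs', fun i hi => ?_⟩
    by_cases hiN : i = ⟨N, hN⟩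
    · rw [hiN, hN', hwx]
    · rw [hrest i hiN, hsx i (Nat.lt_of_le_of_ne (Nat.lt_succ_iff.1 hi) fun h => hiN (Fin.ext h))]

lemma vars_finite (hf : IsVWord f m n) : (Vars f).Finite := by
  obtain ⟨s₀, hs₀⟩ := hf.vars_nonempty
  exact (LP.level_finite V (lev s₀)).subset fun s hs => hf.lev_eq hs hs₀

lemma of_occSet_eq {g : WordFun Λ V} {m' : ℕ} (hg : IsVWord g m' n) (hf : IsWordOn f m n)
    (hocc : ∀ s, occSet f s = occSet g s) : IsVWord f m n := by
  have hvars := vars_eq_of_occSet_eq hocc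
  obtain ⟨-, hne, hlev, hrect, hmin, hls⟩ := hg
  refine ⟨hf, hvars ▸ hne, hvars ▸ hlev, hvars ▸ hrect, ?_, ?_⟩
  · simpa only [hvars, hocc] using hmin
  · simpa only [hvars, hocc] using hls

end IsVWord

lemma occSet_wunion_of_isConst {w g : WordFun Λ V} (hw : IsConst w)
    (hdisj : ∀ t, (w t).isSome → g t = none) (s : LP V) :
    occSet (wunion w g) s = occSet g s := by
  ext t
  simp only [occSet, Set.mem_ofPred_eq]
  rcases hwt : w t with _ | x
  · rw [wunion_of_eq_none _ hwt]
  · have hgt := hdisj t (by simp [hwt])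
    simp only [wunion, hwt, hgt, reduceCtorEq, iff_false, Option.some_inj]
    rintro rfl
    exact hw t s hwt

lemma IsVWord.wunion_of_isConst {w g : WordFun Λ V} {a b c : ℕ} (hw : IsConst w)
    (hab : a ≤ b) (hwOn : IsWordOn w a b) (hg : IsVWord g b c) :
    IsVWord (wunion w g) a c ∧ Vars (wunion w g) = Vars g := by
  have hbc := hg.lt
  have hocc := occSet_wunion_of_isConst hw (g := g) fun t ht => by
    have := (hwOn t).1 ht
    exact Option.not_isSome_iff_eq_none.1 fun hg' => by have := (hg.isWordOn t).1 hg'; omega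
  refine ⟨hg.of_occSet_eq (fun t => ?_) hocc, vars_eq_of_occSet_eq hocc⟩
  rw [wunion_isSome, Bool.or_eq_true, hwOn t, hg.isWordOn t]
  omega

lemma spanWord_finite [Finite Λ] [Nonempty Λ] {f : WordFun Λ V} (hfin : (Vars f).Finite) :
    (spanWord f).Finite := by
  classical
  have := hfin.to_subtype
  refine (Set.finite_range fun a : Vars f → Λ =>
    substW f fun s => if h : s ∈ Vars f then a ⟨s, h⟩ else Classical.arbitrary Λ).subset ?_
  rintro _ ⟨a, rfl⟩
  exact ⟨fun s => a s, funext fun t => substW_apply_congr fun s hs => by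
    simp [show s ∈ Vars f from ⟨t, hs⟩]⟩

lemma spanFin_zero (F : ℕ → WordFun Λ V) : spanFin F 0 = {fun _ => none} := by
  ext g
  constructor
  · rintro ⟨h, -, rfl⟩
    rfl
  · rintro rfl
    exact ⟨fun _ _ => none, fun i hi => absurd hi (Nat.not_lt_zero i), rfl⟩

lemma spanFin_succ (F : ℕ → WordFun Λ V) (q : ℕ) :
    spanFin F (q + 1) = Set.image2 wunion (spanFin F q) (spanWord (F q)) := by
  ext g
  constructor
  · rintro ⟨h, hh, rfl⟩
    exact ⟨_, ⟨h, fun i hi => hh i (by omega), rfl⟩, h q, hh q q.lt_succ_self,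
      (unionMany_succ h q).symm⟩
  · rintro ⟨_, ⟨h, hh, rfl⟩, x, hx, rfl⟩
    refine ⟨fun i => if i < q then h i else x, fun i hi => ?_, ?_⟩
    · rcases (Nat.lt_succ_iff.1 hi).lt_or_eq with hi | rfl
      · simpa [hi] using hh i hi
      · simpa using hx
    · rw [unionMany_succ, if_neg (lt_irrefl q), unionMany_congr fun i hi => if_pos hi]

lemma spanWord_unionMany_subset_spanFin (F : ℕ → WordFun Λ V) (q : ℕ) :
    spanWord (unionMany F q) ⊆ spanFin F q := by
  rintro _ ⟨β, rfl⟩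
  exact ⟨fun j => substW (F j) β, fun _ _ => ⟨β, rfl⟩, substW_unionMany F q β⟩

lemma spanWord_unionMany_subset_spanSeq (F : ℕ → WordFun Λ V) {q : ℕ} (hq : 0 < q) :
    spanWord (unionMany F q) ⊆ spanSeq F :=
  (spanWord_unionMany_subset_spanFin F q).trans (Set.subset_biUnion_of_mem (u := spanFin F) hq)

namespace SubspaceS

variable {kX ℓ : ℕ} (X : SubspaceS Λ V kX ℓ)

lemma e_strictMono : StrictMono X.e :=
  strictMono_nat_of_lt_succ fun j => (X.vword j).lt

lemma le_e (j : ℕ) : ℓ ≤ X.e j := by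
  simpa [X.e0] using X.e_strictMono.monotone (Nat.zero_le j)

lemma exists_block {x B : ℕ} (h1 : ℓ ≤ x) (h2 : x < X.e B) :
    ∃ j < B, X.e j ≤ x ∧ x < X.e (j + 1) := by
  induction B with
  | zero => have := X.e0; omega
  | succ B ih =>
    by_cases hx : x < X.e B
    · obtain ⟨j, hj, hjx⟩ := ih hx
      exact ⟨j, by omega, hjx⟩
    · exact ⟨B, B.lt_succ_self, by omega, h2⟩

lemma eq_of_mem_block {j j' x : ℕ} (h : X.e j ≤ x ∧ x < X.e (j + 1))
    (h' : X.e j' ≤ x ∧ x < X.e (j' + 1)) : j = j' := by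
  by_contra hne
  rcases Nat.lt_or_gt_of_ne hne with hlt | hlt
  · have : X.e (j + 1) ≤ X.e j' := X.e_strictMono.monotone hlt; omega
  · have : X.e (j' + 1) ≤ X.e j := X.e_strictMono.monotone hlt; omega

lemma F_apply_eq_none {j : ℕ} {t : LP V} (h : ¬ (X.e j ≤ lev t ∧ lev t < X.e (j + 1))) :
    X.F j t = none :=
  Option.not_isSome_iff_eq_none.1 fun hs => h (((X.vword j).isWordOn t).1 hs)

lemma mem_block_of_F_apply_isSome {j : ℕ} {t : LP V} (h : (X.F j t).isSome) :
    X.e j ≤ lev t ∧ lev t < X.e (j + 1) :=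
  ((X.vword j).isWordOn t).1 h

lemma eq_of_mem_vars {j j' : ℕ} {s : LP V} (h : s ∈ Vars (X.F j)) (h' : s ∈ Vars (X.F j')) :
    j = j' :=
  X.eq_of_mem_block ((X.vword j).lev_mem_Ico h) ((X.vword j').lev_mem_Ico h')

lemma unionMany_F_apply {j q : ℕ} {t : LP V} (hj : j < q)
    (ht : X.e j ≤ lev t ∧ lev t < X.e (j + 1)) : unionMany X.F q t = X.F j t :=
  unionMany_apply_of_unique hj fun _ _ hij =>
    X.F_apply_eq_none fun hi => hij (X.eq_of_mem_block hi ht)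

lemma unionMany_F_isSome {q : ℕ} {t : LP V} :
    (unionMany X.F q t).isSome ↔ ℓ ≤ lev t ∧ lev t < X.e q := by
  constructor
  · intro hs
    by_contra hc
    rw [unionMany_apply_eq_none fun i _ => X.F_apply_eq_none fun ht => hc
      ⟨(X.le_e i).trans ht.1, ht.2.trans_le (X.e_strictMono.monotone (by omega))⟩] at hs
    exact Bool.false_ne_true hs
  · rintro ⟨h1, h2⟩
    obtain ⟨j, hj, ht⟩ := X.exists_block h1 h2
    rw [X.unionMany_F_apply hj ht]
    exact ((X.vword j).isWordOn t).2 ht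

lemma unionMany_F_eq_inr {q : ℕ} {t s : LP V} :
    unionMany X.F q t = some (Sum.inr s) ↔ ∃ j < q, X.F j t = some (Sum.inr s) := by
  constructor
  · intro h
    obtain ⟨h1, h2⟩ := X.unionMany_F_isSome.1 (by rw [h]; rfl)
    obtain ⟨j, hj, ht⟩ := X.exists_block h1 h2
    exact ⟨j, hj, X.unionMany_F_apply hj ht ▸ h⟩
  · rintro ⟨j, hj, h⟩
    rw [X.unionMany_F_apply hj (X.mem_block_of_F_apply_isSome (by rw [h]; rfl)), h]

lemma lev_lt_e_iff_of_unionMany_F_eq_inr {q P : ℕ} {t s : LP V}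
    (h : unionMany X.F q t = some (Sum.inr s)) : lev s < X.e P ↔ lev t < X.e P := by
  obtain ⟨j, -, hjt⟩ := X.unionMany_F_eq_inr.1 h
  have hs : s ∈ Vars (X.F j) := ⟨t, hjt⟩
  have hst := ((X.vword j).lpLE_of_mem_occSet hs hjt).lev_le
  have hjs := ((X.vword j).lev_mem_Ico hs).1
  have hjt' := (X.mem_block_of_F_apply_isSome (by rw [hjt]; rfl)).2
  refine ⟨fun hsP => ?_, fun htP => hst.trans_lt htP⟩
  have hjP : j + 1 ≤ P := Nat.succ_le_of_lt (X.e_strictMono.lt_iff_lt.1 (hjs.trans_lt hsP))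
  exact hjt'.trans_le (X.e_strictMono.monotone hjP)

lemma unionMany_F_apply_of_lt {P B : ℕ} (hPB : P ≤ B) {t : LP V} (ht : lev t < X.e P) :
    unionMany X.F B t = unionMany X.F P t := by
  by_cases hl : ℓ ≤ lev t
  · obtain ⟨j, hj, hjt⟩ := X.exists_block hl ht
    rw [X.unionMany_F_apply (hj.trans_le hPB) hjt, X.unionMany_F_apply hj hjt]
  · rw [Option.not_isSome_iff_eq_none.1 fun h => hl (X.unionMany_F_isSome.1 h).1,
      Option.not_isSome_iff_eq_none.1 fun h => hl (X.unionMany_F_isSome.1 h).1]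

lemma wunion_substW_restrictFrom {P B : ℕ} (hPB : P ≤ B) (β β' : LP V → Λ) :
    wunion (substW (unionMany X.F P) β) (restrictFrom (X.e P) (substW (unionMany X.F B) β'))
      = substW (unionMany X.F B) (fun s => if lev s < X.e P then β s else β' s) := by
  funext t
  by_cases ht : lev t < X.e P
  · rw [wunion_of_eq_none_right _ (by simp [restrictFrom, ht])]
    simp only [substW, X.unionMany_F_apply_of_lt hPB ht]
    exact substW_apply_congr fun s hs => by
      simp [(X.lev_lt_e_iff_of_unionMany_F_eq_inr hs).2 ht]
  · have hnone : unionMany X.F P t = none :=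
      Option.not_isSome_iff_eq_none.1 fun h => ht (X.unionMany_F_isSome.1 h).2
    rw [wunion_of_eq_none _ (by simp [substW, hnone])]
    simp only [restrictFrom, not_lt.1 ht, if_true]
    exact substW_apply_congr fun s hs => by
      simp [mt (X.lev_lt_e_iff_of_unionMany_F_eq_inr hs).1 ht]

lemma wunion_mem_spanWord_unionMany {P B : ℕ} (hPB : P ≤ B) {w : WordFun Λ V}
    (hw : w ∈ spanWord (unionMany X.F P)) (β : LP V → Λ) :
    wunion w (restrictFrom (X.e P) (substW (unionMany X.F B) β))
      ∈ spanWord (unionMany X.F B) := by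
  obtain ⟨β₀, rfl⟩ := hw
  exact ⟨_, X.wunion_substW_restrictFrom hPB β₀ β⟩

lemma exists_coordwise_lift (j : ℕ) :
    ∃ j' > j, ∃ lift : LP V → LP V, ∀ s ∈ Vars (X.F j),
      lift s ∈ Vars (X.F j') ∧ lpLE s (lift s) ∧
      ∀ s' ∈ Vars (X.F j), ∀ i, s.1 i = s'.1 i → (lift s).1 i = (lift s').1 i := by
  set j' := j + 1 + X.e (j + 1)
  -- `j'` is chosen so that block `j'` dominates every level of block `j`
  have hdom : ∀ s ∈ Vars (X.F j), DominatesLevel V (Vars (X.F j')) (lev s) := fun s hs =>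
    (X.dom j').mono (by have := ((X.vword j).lev_mem_Ico hs).2; omega)
  have hφ : ∀ i (u : List ℕ), ∃ v, ∀ s ∈ Vars (X.F j), s.1 i = u →
      ∃ w ∈ Vars (X.F j'), w.1 i = v ∧ u <+: v := by
    intro i u
    by_cases hu : ∃ s ∈ Vars (X.F j), s.1 i = u
    · obtain ⟨s, hs, rfl⟩ := hu
      obtain ⟨w, hw, hsw⟩ := hdom s hs i (s.1 i) (s.2.1 i) (length_coord s i)
      exact ⟨w.1 i, fun s' hs' hs'i => ⟨w, hw, rfl, hs'i ▸ hsw⟩⟩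
    · exact ⟨u, fun s hs hsu => absurd ⟨s, hs, hsu⟩ hu⟩
  choose φ hφ using hφ
  have hlift : ∀ s, ∃ s', s ∈ Vars (X.F j) → s' ∈ Vars (X.F j') ∧ ∀ i, s'.1 i = φ i (s.1 i) := by
    intro s
    by_cases hs : s ∈ Vars (X.F j)
    · obtain ⟨s', hs', hs'φ⟩ := (X.vword j').exists_mem_vars_of_coords (fun i => φ i (s.1 i))
        fun i => by
          obtain ⟨w, hw, hwi, -⟩ := hφ i _ s hs rfl
          exact ⟨w, hw, hwi.symm⟩
      exact ⟨s', fun _ => ⟨hs', fun i => congrFun hs'φ i⟩⟩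
    · exact ⟨s, fun h => absurd h hs⟩
  choose lift hlift using hlift
  refine ⟨j', by omega, lift, fun s hs => ⟨(hlift s hs).1, fun i => ?_, fun s' hs' i hi => ?_⟩⟩
  · obtain ⟨-, -, -, hpre⟩ := hφ i _ s hs rfl
    rwa [(hlift s hs).2 i]
  · rw [(hlift s hs).2 i, (hlift s' hs').2 i, hi]

lemma isWordOn_restrictFrom_unionMany {P B : ℕ} :
    IsWordOn (restrictFrom (X.e P) (unionMany X.F B)) (X.e P) (X.e B) := fun t => by
  rw [restrictFrom_isSome, X.unionMany_F_isSome]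
  have := X.le_e P
  omega

lemma restrictFrom_unionMany_F_eq_inr {P B : ℕ} {t s : LP V} :
    restrictFrom (X.e P) (unionMany X.F B) t = some (Sum.inr s) ↔
      ∃ j, P ≤ j ∧ j < B ∧ X.F j t = some (Sum.inr s) := by
  simp only [restrictFrom]
  split_ifs with h
  · rw [X.unionMany_F_eq_inr]
    refine ⟨fun ⟨j, hj, hjt⟩ => ⟨j, ?_, hj, hjt⟩, fun ⟨j, _, hj, hjt⟩ => ⟨j, hj, hjt⟩⟩
    have := (X.mem_block_of_F_apply_isSome (by rw [hjt]; rfl)).2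
    exact Nat.le_of_lt_succ (X.e_strictMono.lt_iff_lt.1 (h.trans_lt this))
  · refine ⟨fun h' => absurd h' (by simp), fun ⟨j, hPj, _, hjt⟩ => absurd ?_ h⟩
    exact (X.e_strictMono.monotone hPj).trans (X.mem_block_of_F_apply_isSome (by rw [hjt]; rfl)).1

end SubspaceS

/-- Since each `emb n` acts coordinatewise, it carries the rectangle `Vars (X.F j₀)` onto a
subrectangle of `Vars (X.F (blk n))`. -/
structure EmbChain {kX ℓ : ℕ} (X : SubspaceS Λ V kX ℓ) (j₀ : ℕ) where
  blk : ℕ → ℕ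
  emb : ℕ → LP V → LP V
  blk_zero : blk 0 = j₀
  blk_strictMono : StrictMono blk
  emb_zero : ∀ s, emb 0 s = s
  emb_mem : ∀ n, ∀ s ∈ Vars (X.F j₀), emb n s ∈ Vars (X.F (blk n))
  lpLE_emb_succ : ∀ n, ∀ s ∈ Vars (X.F j₀), lpLE (emb n s) (emb (n + 1) s)
  emb_coord : ∀ n, ∀ s ∈ Vars (X.F j₀), ∀ s' ∈ Vars (X.F j₀), ∀ i,
    s.1 i = s'.1 i → (emb n s).1 i = (emb n s').1 i

namespace EmbChain

variable {kX ℓ j₀ : ℕ} {X : SubspaceS Λ V kX ℓ}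

lemma _root_.SubspaceS.nonempty_embChain (X : SubspaceS Λ V kX ℓ) (j₀ : ℕ) :
    Nonempty (EmbChain X j₀) := by
  choose nxt hnxt lift hlift using X.exists_coordwise_lift
  let blk : ℕ → ℕ := fun n => nxt^[n] j₀
  have hblk : ∀ n, blk (n + 1) = nxt (blk n) := fun n => Function.iterate_succ_apply' nxt n j₀
  let emb : ℕ → LP V → LP V := fun n => Nat.rec id (fun n e => lift (blk n) ∘ e) n
  have hmem : ∀ n, ∀ s ∈ Vars (X.F j₀), emb n s ∈ Vars (X.F (blk n)) := by
    intro n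
    induction n with
    | zero => exact fun s hs => hs
    | succ n ih => exact fun s hs => hblk n ▸ (hlift _ _ (ih s hs)).1
  refine ⟨⟨blk, emb, rfl, strictMono_nat_of_lt_succ fun n => hblk n ▸ hnxt _, fun _ => rfl,
    hmem, fun n s hs => (hlift _ _ (hmem n s hs)).2.1, fun n => ?_⟩⟩
  induction n with
  | zero => exact fun _ _ _ _ _ hi => hi
  | succ n ih =>
    intro s hs s' hs' i hi
    exact (hlift _ _ (hmem n s hs)).2.2 _ (hmem n s' hs') i (ih s hs s' hs' i hi)

variable (C : EmbChain X j₀)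

lemma lpLE_emb {a b : ℕ} (hab : a ≤ b) {s : LP V} (hs : s ∈ Vars (X.F j₀)) :
    lpLE (C.emb a s) (C.emb b s) := by
  induction b, hab using Nat.le_induction with
  | base => exact lpLE_refl _
  | succ b _ ih => exact ih.trans (C.lpLE_emb_succ b s hs)

lemma lpLE_self_emb (n : ℕ) {s : LP V} (hs : s ∈ Vars (X.F j₀)) : lpLE s (C.emb n s) := by
  simpa only [C.emb_zero] using C.lpLE_emb (Nat.zero_le n) hs

lemma lev_emb_eq (n : ℕ) {s s' : LP V} (hs : s ∈ Vars (X.F j₀)) (hs' : s' ∈ Vars (X.F j₀)) :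
    lev (C.emb n s) = lev (C.emb n s') :=
  (X.vword (C.blk n)).lev_eq (C.emb_mem n s hs) (C.emb_mem n s' hs')

lemma emb_injOn (n : ℕ) : Set.InjOn (C.emb n) (Vars (X.F j₀)) := fun _ hs _ hs' h =>
  eq_of_lpLE_of_lev_eq (C.lpLE_self_emb n hs) (h ▸ C.lpLE_self_emb n hs')
    ((X.vword j₀).lev_eq hs hs')

lemma injective_emb_uncurry (N : ℕ) :
    Function.Injective fun p : Fin N × Vars (X.F j₀) => C.emb p.1 p.2.1 := by
  rintro ⟨a, s, hs⟩ ⟨b, s', hs'⟩ h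
  dsimp only at h
  have hab : a = b := Fin.ext <| C.blk_strictMono.injective <|
    X.eq_of_mem_vars (C.emb_mem a s hs) (h ▸ C.emb_mem b s' hs')
  subst hab
  simp [C.emb_injOn a hs hs' h]

variable {N : ℕ}

noncomputable def preimage (N : ℕ) : LP V → Option (Fin N × Vars (X.F j₀)) :=
  Function.partialInv fun p => C.emb p.1 p.2.1

lemma preimage_eq_some {s : LP V} {p : Fin N × Vars (X.F j₀)} :
    C.preimage N s = some p ↔ C.emb p.1 p.2.1 = s :=
  (C.injective_emb_uncurry N).isPartialInv p s

noncomputable def pattern (lam : Λ) (v : Fin N → Vars (X.F j₀) → Λ) (s : LP V) : Λ :=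
  match C.preimage N s with
  | some p => v p.1 p.2
  | none => lam

noncomputable def cubeWord (P : ℕ) (lam : Λ) (v : Fin N → Vars (X.F j₀) → Λ) : WordFun Λ V :=
  restrictFrom (X.e P) (substW (unionMany X.F (C.blk N)) (C.pattern lam v))

noncomputable def lineLabel (lam : Λ) (l : Combinatorics.Subspace Unit (Vars (X.F j₀) → Λ) (Fin N))
    (m : Fin N) (s : LP V) : Λ ⊕ LP V :=
  match C.preimage N s with
  | some p => Sum.elim (fun c => Sum.inl (c p.2)) (fun _ => Sum.inr (C.emb m p.2)) (l.idxFun p.1)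
  | none => Sum.inl lam

noncomputable def lineWord (P : ℕ) (lam : Λ)
    (l : Combinatorics.Subspace Unit (Vars (X.F j₀) → Λ) (Fin N)) (m : Fin N) : WordFun Λ V :=
  relabel (C.lineLabel lam l m) (restrictFrom (X.e P) (unionMany X.F (C.blk N)))

variable (lam : Λ) (l : Combinatorics.Subspace Unit (Vars (X.F j₀) → Λ) (Fin N)) (m : Fin N)

lemma lineLabel_eq_inr {s r : LP V} :
    C.lineLabel lam l m s = Sum.inr r ↔
      ∃ n, ∃ x ∈ Vars (X.F j₀), l.idxFun n = Sum.inr () ∧ C.emb n x = s ∧ C.emb m x = r := by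
  simp only [lineLabel]
  rcases hs : C.preimage N s with _ | ⟨n, x, hx⟩
  · refine ⟨fun h => (by cases h), fun ⟨n, x, hx, _, hxs, _⟩ => ?_⟩
    have := (C.preimage_eq_some (p := (n, ⟨x, hx⟩))).2 hxs
    simp [hs] at this
  · have hxs := (C.preimage_eq_some).1 hs
    refine ⟨fun h => ?_, fun ⟨n', x', hx', hn', hx's, hr⟩ => ?_⟩
    · rcases hn : l.idxFun n with c | ⟨⟩
      · simp [hn] at h
      · simp only [hn, Sum.elim_inr, Sum.inr.injEq] at h
        exact ⟨n, x, hx, hn, hxs, h⟩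
    · obtain ⟨rfl, rfl⟩ : n = n' ∧ x = x' := by
        have := C.injective_emb_uncurry N (a₁ := (n, ⟨x, hx⟩)) (a₂ := (n', ⟨x', hx'⟩))
          (hxs.trans hx's.symm)
        simpa using this
      simp [hn', hr]

variable {P : ℕ} (hP : P ≤ j₀) {l m}

include hP in
lemma blk_mem_Ico (n : Fin N) : P ≤ C.blk n ∧ C.blk n < C.blk N :=
  ⟨hP.trans (by simpa [C.blk_zero] using C.blk_strictMono.monotone (Nat.zero_le (n : ℕ))),
    C.blk_strictMono n.isLt⟩

include hP in
lemma occSet_lineWord {x : LP V} (hx : x ∈ Vars (X.F j₀)) :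
    occSet (C.lineWord P lam l m) (C.emb m x) =
      ⋃ n ∈ {n | l.idxFun n = Sum.inr ()}, occSet (X.F (C.blk n)) (C.emb n x) := by
  ext t
  simp only [occSet, lineWord, Set.mem_ofPred_eq, Set.mem_iUnion, relabel_eq_inr,
    C.lineLabel_eq_inr, X.restrictFrom_unionMany_F_eq_inr]
  constructor
  · rintro ⟨_, ⟨j, -, -, hjt⟩, n, y, hy, hn, rfl, hyx⟩
    obtain rfl := C.emb_injOn m hy hx hyx
    obtain rfl := X.eq_of_mem_vars ⟨t, hjt⟩ (C.emb_mem n y hy)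
    exact ⟨n, hn, hjt⟩
  · rintro ⟨n, hn, ht⟩
    exact ⟨C.emb n x, ⟨C.blk n, (C.blk_mem_Ico hP n).1, (C.blk_mem_Ico hP n).2, ht⟩,
      n, x, hx, hn, rfl, rfl⟩

variable (hm : l.idxFun m = Sum.inr ())

include hP hm in
lemma vars_lineWord : Vars (C.lineWord P lam l m) = C.emb m '' Vars (X.F j₀) := by
  ext r
  constructor
  · rintro ⟨t, ht⟩
    obtain ⟨s, -, hs⟩ := relabel_eq_inr.1 ht
    obtain ⟨n, y, hy, -, -, rfl⟩ := (C.lineLabel_eq_inr lam l m).1 hs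
    exact ⟨y, hy, rfl⟩
  · rintro ⟨x, hx, rfl⟩
    refine ⟨C.emb m x, ?_⟩
    change C.emb m x ∈ occSet _ _
    rw [C.occSet_lineWord lam hP hx]
    exact Set.mem_biUnion (x := m) hm ((X.vword _).self_mem_occSet (C.emb_mem m x hx))

include hP hm in
lemma isVWord_lineWord (hmin : ∀ n, l.idxFun n = Sum.inr () → m ≤ n) :
    IsVWord (C.lineWord P lam l m) (X.e P) (X.e (C.blk N)) := by
  have hR := X.vword j₀
  have hV := C.vars_lineWord lam hP hm
  refine ⟨fun t => ?_, ?_, ?_, ?_, ?_, ?_⟩ <;> try rw [hV]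
  · rw [lineWord, relabel_isSome]
    exact X.isWordOn_restrictFrom_unionMany t
  · exact hR.vars_nonempty.image _
  · rintro _ ⟨x, hx, rfl⟩ _ ⟨x', hx', rfl⟩
    exact C.lev_emb_eq m hx hx'
  · rintro _ ⟨x, hx, rfl⟩ _ ⟨x', hx', rfl⟩ i₀
    obtain ⟨w, hw, hwx, hwx'⟩ := hR.2.2.2.1 x hx x' hx' i₀
    exact ⟨C.emb m w, ⟨w, hw, rfl⟩, fun i hi => C.emb_coord m w hw x hx i (hwx i hi),
      C.emb_coord m w hw x' hx' i₀ hwx'⟩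
  · rintro _ ⟨x, hx, rfl⟩
    rw [C.occSet_lineWord lam hP hx]
    refine ⟨Set.mem_biUnion (x := m) hm ((X.vword _).self_mem_occSet (C.emb_mem m x hx)), ?_⟩
    simp only [Set.mem_iUnion]
    rintro t ⟨n, hn, ht⟩
    exact (C.lpLE_emb (hmin n hn) hx).trans ((X.vword _).lpLE_of_mem_occSet (C.emb_mem n x hx) ht)
  · rintro _ ⟨x, hx, rfl⟩ _ ⟨x', hx', rfl⟩
    simp only [levSet, C.occSet_lineWord lam hP hx, C.occSet_lineWord lam hP hx', Set.image_iUnion₂]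
    exact Set.iUnion₂_congr fun n _ =>
      (X.vword _).levSet_occSet_eq (C.emb_mem n x hx) (C.emb_mem n x' hx')

include hP hm in
lemma dominatesLevel_lineWord : DominatesLevel V (Vars (C.lineWord P lam l m)) (kX + j₀) := by
  rw [C.vars_lineWord lam hP hm]
  intro i u hu hlen
  obtain ⟨s, hs, hus⟩ := X.dom j₀ i u hu hlen
  exact ⟨C.emb m s, ⟨s, hs, rfl⟩, hus.trans (C.lpLE_self_emb m hs i)⟩

omit hP in
lemma substW_lineWord (α : LP V → Λ) :
    substW (C.lineWord P lam l m) α = C.cubeWord P lam (l fun _ r => α (C.emb m r)) := by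
  simp only [lineWord, cubeWord, substW_eq_relabel, relabel_relabel, relabel_restrictFrom]
  congr 2
  funext s
  simp only [Function.comp_apply, lineLabel, pattern, Combinatorics.Subspace.coe_apply]
  rcases C.preimage N s with _ | ⟨n, x⟩
  · rfl
  · dsimp only
    rcases l.idxFun n with c | ⟨⟩ <;> rfl

end EmbChain

namespace SubspaceS

variable {kX ℓ : ℕ} (X : SubspaceS Λ V kX ℓ)

lemma isWordOn_of_mem_spanWord_unionMany {P : ℕ} {w : WordFun Λ V}
    (hw : w ∈ spanWord (unionMany X.F P)) : IsWordOn w ℓ (X.e P) := by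
  obtain ⟨β, rfl⟩ := hw
  intro t
  rw [substW_eq_relabel, relabel_isSome, X.unionMany_F_isSome]

lemma exists_avoiding_word [Finite Λ] [Nonempty Λ] (E : Set (WordFun Λ V)) {k : ℕ}
    (hcon : ¬ ∃ m n f, IsVWord f m n ∧ spanWord f ⊆ E ∩ spanSeq X.F ∧ DominatesLevel V (Vars f) k)
    (q P : ℕ) {W : Set (WordFun Λ V)} (hWfin : W.Finite) (hW : W ⊆ spanWord (unionMany X.F P)) :
    ∃ B g, P < B ∧ IsVWord g (X.e P) (X.e B) ∧ DominatesLevel V (Vars g) q ∧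
      Set.image2 wunion W (spanWord g) ⊆ spanWord (unionMany X.F B) ∧
      Disjoint (Set.image2 wunion W (spanWord g)) E := by
  obtain ⟨lam⟩ := ‹Nonempty Λ›
  obtain ⟨C⟩ := X.nonempty_embChain (P + k + q + 1)
  have hP : P ≤ P + k + q + 1 := by omega
  have := (X.vword (P + k + q + 1)).vars_finite.to_subtype
  have := hWfin.to_subtype
  obtain ⟨N, hN⟩ := Combinatorics.Subspace.exists_mono_in_high_dimension_fin
    (Vars (X.F (P + k + q + 1)) → Λ) (W → Prop) Unit
  obtain ⟨l, c, hc⟩ := hN fun v w => wunion w.1 (C.cubeWord P lam v) ∈ E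
  obtain ⟨m, hm, hmin⟩ := WellFounded.has_min wellFounded_lt {n | l.idxFun n = Sum.inr ()}
    (l.proper ())
  set g := C.lineWord P lam l m
  have hg := C.isVWord_lineWord lam hP hm fun n hn => not_lt.1 (hmin n hn)
  have hdom := C.dominatesLevel_lineWord lam hP hm
  have hPB : P < C.blk N := X.e_strictMono.lt_iff_lt.1 hg.lt
  have hspan : ∀ w ∈ W, ∀ x ∈ spanWord g, wunion w x ∈ spanWord (unionMany X.F (C.blk N)) := by
    rintro w hw _ ⟨α, rfl⟩
    rw [C.substW_lineWord]
    exact X.wunion_mem_spanWord_unionMany hPB.le (hW hw) _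
  have hcolor : ∀ w (hw : w ∈ W) α, wunion w (substW g α) ∈ E ↔ c ⟨w, hw⟩ := fun w hw α => by
    rw [C.substW_lineWord]
    exact Iff.of_eq (congrFun (hc _) ⟨w, hw⟩)
  have hno : ∀ w (hw : w ∈ W), ¬ c ⟨w, hw⟩ := by
    intro w hw hcw
    have hwOn := X.isWordOn_of_mem_spanWord_unionMany (hW hw)
    obtain ⟨β, rfl⟩ := hW hw
    obtain ⟨hwg, hvars⟩ := hg.wunion_of_isConst (substW_isConst _ _) (X.le_e P) hwOn
    refine hcon ⟨ℓ, X.e (C.blk N), _, hwg, ?_, hvars ▸ hdom.mono (by omega)⟩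
    rintro _ ⟨α, rfl⟩
    rw [substW_wunion, substW_of_isConst (substW_isConst _ _)]
    exact ⟨(hcolor _ hw α).2 hcw,
      spanWord_unionMany_subset_spanSeq X.F (by omega) (hspan _ hw _ ⟨α, rfl⟩)⟩
  refine ⟨C.blk N, g, hPB, hg, hdom.mono (by omega), ?_, ?_⟩
  · rintro _ ⟨w, hw, x, hx, rfl⟩
    exact hspan w hw x hx
  · rw [Set.disjoint_left]
    rintro _ ⟨w, hw, _, ⟨α, rfl⟩, rfl⟩ hwE
    exact hno w hw ((hcolor w hw α).1 hwE)

lemma exists_subspace_disjoint [Finite Λ] [Nonempty Λ] (E : Set (WordFun Λ V)) {k : ℕ}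
    (hcon : ¬ ∃ m n f, IsVWord f m n ∧ spanWord f ⊆ E ∩ spanSeq X.F ∧ DominatesLevel V (Vars f) k) :
    ∃ Y : SubspaceS Λ V 0 ℓ, spanSeq Y.F ⊆ spanSeq X.F ∧ Disjoint (spanSeq Y.F) E := by
  have step : ∀ (q : ℕ) (s : ℕ × Set (WordFun Λ V)), ∃ r : ℕ × WordFun Λ V,
      s.2.Finite → s.2 ⊆ spanWord (unionMany X.F s.1) →
        s.1 < r.1 ∧ IsVWord r.2 (X.e s.1) (X.e r.1) ∧ DominatesLevel V (Vars r.2) q ∧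
        Set.image2 wunion s.2 (spanWord r.2) ⊆ spanWord (unionMany X.F r.1) ∧
        Disjoint (Set.image2 wunion s.2 (spanWord r.2)) E := by
    intro q s
    by_cases hs : s.2.Finite ∧ s.2 ⊆ spanWord (unionMany X.F s.1)
    · obtain ⟨B, g, hg⟩ := X.exists_avoiding_word E hcon q s.1 hs.1 hs.2
      exact ⟨(B, g), fun _ _ => hg⟩
    · exact ⟨(0, fun _ => none), fun h₁ h₂ => absurd ⟨h₁, h₂⟩ hs⟩
  choose next hnext using step
  let state : ℕ → ℕ × Set (WordFun Λ V) := fun q => Nat.rec (0, {fun _ => none})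
    (fun q s => ((next q s).1, Set.image2 wunion s.2 (spanWord (next q s).2))) q
  let Y : ℕ → WordFun Λ V := fun q => (next q (state q)).2
  have hstate : ∀ q, (state q).2 = spanFin Y q ∧ (state q).2.Finite ∧
      (state q).2 ⊆ spanWord (unionMany X.F (state q).1) := by
    intro q
    induction q with
    | zero =>
      refine ⟨(spanFin_zero Y).symm, Set.finite_singleton _, ?_⟩
      rintro _ rfl
      exact ⟨fun _ => Classical.arbitrary Λ, rfl⟩
    | succ q ih =>
      obtain ⟨hY, hfin, hsub⟩ := ih
      obtain ⟨-, hvw, -, hspan, -⟩ := hnext q (state q) hfin hsub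
      exact ⟨by rw [spanFin_succ, ← hY], hfin.image2 _ (spanWord_finite hvw.vars_finite), hspan⟩
  have hY := fun q => hnext q (state q) (hstate q).2.1 (hstate q).2.2
  refine ⟨⟨Y, fun q => X.e (state q).1, X.e0, fun q => (hY q).2.1,
    fun q => by simpa using (hY q).2.2.1⟩, fun w hw => ?_, Set.disjoint_left.2 fun w hw => ?_⟩
  all_goals
    simp only [spanSeq, Set.mem_iUnion] at hw
    obtain ⟨_, hq, hw⟩ := hw
    obtain ⟨q, rfl⟩ := Nat.exists_eq_succ_of_ne_zero (Nat.pos_iff_ne_zero.1 hq)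
    rw [← (hstate (q + 1)).1] at hw
  · exact spanWord_unionMany_subset_spanSeq X.F (Nat.zero_lt_of_lt (hY q).1)
      ((hstate (q + 1)).2.2 hw)
  · exact Set.disjoint_left.1 (hY q).2.2.2.2 hw

end SubspaceS

theorem stmt8_general {d : ℕ} (Λ : Type) [Finite Λ] (V : Fin (d + 1) → TreeT)
    (k ℓ : ℕ) (kX : ℕ) (X : SubspaceS Λ V kX ℓ)
    (E : Set (WordFun Λ V)) (hE : LargeIn E X) :
    ∃ (m n : ℕ) (f : WordFun Λ V),
      IsVWord f m n ∧
      spanWord f ⊆ E ∩ spanSeq X.F ∧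
      DominatesLevel V (Vars f) k := by
  rcases isEmpty_or_nonempty Λ with hΛ | hΛ
  · refine ⟨_, _, X.F k, X.vword k, ?_, (X.dom k).mono (by omega)⟩
    rintro _ ⟨a, -⟩
    exact isEmptyElim (a (X.vword k).vars_nonempty.some)
  · by_contra hcon
    obtain ⟨Y, hYX, hYE⟩ := X.exists_subspace_disjoint E hcon
    obtain ⟨w, hwE, hwY⟩ := hE 0 Y hYX
    exact Set.disjoint_left.1 hYE hwY hwE

/-- **Getting inside a large set.** If `E ⊆ W(ℓ)` is large in the `ℓ`-subspace `X`, then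
for every `k` there exists a variable word `f` with `[f]_Λ ⊆ E ∩ [X]_Λ` whose variable
support `ws(f)` dominates `T(k)`. -/
theorem stmt8 {d : ℕ} (Λ : Type) [Finite Λ] (V : Fin (d + 1) → TreeT)
    (k ℓ : ℕ) (kX : ℕ) (X : SubspaceS Λ V kX ℓ)
    (E : Set (WordFun Λ V)) (hEW : E ⊆ Wl Λ V ℓ) (hE : LargeIn E X) :
    ∃ (m n : ℕ) (f : WordFun Λ V),
      IsVWord f m n ∧
      spanWord f ⊆ E ∩ spanSeq X.F ∧
      DominatesLevel V (Vars f) k :=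
  stmt8_general Λ V k ℓ kX X E hE
end

section
/- Let Λ be a finite alphabet and T a vector tree of infinite height. For every finite Souslin measurable coloring of W^∞(Λ,T), the set of all maps from ⊗T into Λ with the product topology, and every subspace Q of W^∞(Λ,T), there exists a further subspace Q' ≤ Q such that [Q']_Λ is monochromatic. -/
set_option autoImplicit false

variable {d : ℕ}

/-- A vector subset `D` of the vector tree `V`: componentwise subsets of the trees with a
common level set. -/
structure VecSub {d : ℕ} (V : Fin (d + 1) → TreeT) where
  sets : Fin (d + 1) → Set (List ℕ)
  mem : ∀ i, ∀ u ∈ sets i, (V i).mem u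
  lvl : ∀ i j, {n : ℕ | ∃ u ∈ sets i, u.length = n} = {n : ℕ | ∃ u ∈ sets j, u.length = n}

variable {d : ℕ} {V : Fin (d + 1) → TreeT}

/-- The level set `L_T(D)` of a vector subset. -/
def VecSub.lvlSet (D : VecSub V) : Set ℕ := {n : ℕ | ∃ u ∈ D.sets 0, u.length = n}

/-- The increasing enumeration `ℓ₀ < ℓ₁ < ⋯` of the level set of `D`. -/
noncomputable def VecSub.L (D : VecSub V) (k : ℕ) : ℕ := Nat.nth (· ∈ D.lvlSet) k

/-- `D` is a dense vector subset of `V`: its level set is infinite and, for every `k`,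
`D` at level `ℓ_k` dominates the `k`-th level of `V` componentwise. -/
def VecSub.IsDense (D : VecSub V) : Prop :=
  D.lvlSet.Infinite ∧
  ∀ (k : ℕ) (i : Fin (d + 1)) (u : List ℕ), (V i).mem u → u.length = k →
    ∃ w ∈ D.sets i, w.length = D.L k ∧ u <+: w

/-- `D` is a `t`-dense vector subset: componentwise, `D_i ∩ suc_{T_i}(t_i)` is dense in
the tree `suc_{T_i}(t_i)` of successors of `t_i`. -/
def VecSub.IsTDense (D : VecSub V) (t : LP V) : Prop :=
  ∀ i : Fin (d + 1),
    {n : ℕ | ∃ u ∈ D.sets i, t.1 i <+: u ∧ u.length = n}.Infinite ∧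
    ∀ (k : ℕ) (u : List ℕ), (V i).mem u → t.1 i <+: u → u.length = (t.1 i).length + k →
      ∃ w ∈ D.sets i, t.1 i <+: w ∧
        w.length = Nat.nth (· ∈ {n : ℕ | ∃ u' ∈ D.sets i, t.1 i <+: u' ∧ u'.length = n}) k ∧
        u <+: w

/-- The level product `⊗D` of a vector subset, as a subset of `⊗T`. -/
def lprod (D : VecSub V) : Set (LP V) := {t | ∀ i, t.1 i ∈ D.sets i}

/-- The restriction `D↾m` of `D` to its first `m` levels. -/
def VecSub.restr (D : VecSub V) (m : ℕ) : Fin (d + 1) → Set (List ℕ) :=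
  fun i => {w ∈ D.sets i | ∃ k < m, w.length = D.L k}

/-- The part of `⊗D` lying on the first `m` levels of `D`. -/
def lprodUpto (D : VecSub V) (m : ℕ) : Set (LP V) :=
  {t ∈ lprod D | ∃ k < m, lev t = D.L k}

/-- The `n`-th level `⊗D(n)` of the level product of `D`. -/
def lprodAt (D : VecSub V) (n : ℕ) : Set (LP V) :=
  {t ∈ lprod D | lev t = D.L n}

/-- The Souslin operation applied to a Souslin scheme indexed by finite sequences of
naturals. -/
def souslinOp {α : Type} (s : List ℕ → Set α) : Set α :=
  ⋃ σ : ℕ → ℕ, ⋂ n : ℕ, s ((List.range n).map σ)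

/-- `A` is Souslin measurable with respect to the topology `τ`: it belongs to every
collection of sets that contains the open sets, is closed under complements and finite
unions (i.e. is an algebra), and is closed under the Souslin operation. -/
def SMeas {α : Type} (τ : TopologicalSpace α) (A : Set α) : Prop :=
  ∀ C : Set (Set α),
    (∀ U : Set α, τ.IsOpen U → U ∈ C) →
    (∀ B ∈ C, Bᶜ ∈ C) →
    (∀ B B' : Set α, B ∈ C → B' ∈ C → B ∪ B' ∈ C) →
    (∀ s : List ℕ → Set α, (∀ l, s l ∈ C) → souslinOp s ∈ C) →
    A ∈ C

/-- A subspace `Q` of `W^∞(Λ,T)`: a map from `⊗T` into `Λ ∪ {v_t : t ∈ ⊗T}` together with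
a dense vector subset `D` of `T` such that the variable `v_t` occurs iff `t ∈ ⊗D`, the
occurrence set of `v_t` is finite with minimum `t`, occurrence sets of variables at the
same level have the same level set, and occurrence sets of variables at strictly increasing
levels occupy strictly increasing blocks of levels. -/
structure InfSubspace (Λ : Type) {d : ℕ} (V : Fin (d + 1) → TreeT) where
  Q : LP V → Λ ⊕ LP V
  D : VecSub V
  dense : D.IsDense
  varIff : ∀ t : LP V, (∃ x, Q x = Sum.inr t) ↔ t ∈ lprod D
  occFin : ∀ t ∈ lprod D, {x | Q x = Sum.inr t}.Finite
  occMin : ∀ t ∈ lprod D, Q t = Sum.inr t ∧ ∀ x, Q x = Sum.inr t → lpLE t x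
  sameLev : ∀ t ∈ lprod D, ∀ t' ∈ lprod D, lev t = lev t' →
    levSet {x | Q x = Sum.inr t} = levSet {x | Q x = Sum.inr t'}
  incLev : ∀ t ∈ lprod D, ∀ t' ∈ lprod D, lev t < lev t' →
    ∀ x y, Q x = Sum.inr t → Q y = Sum.inr t' → lev x < lev y

/-- The span `[Q]_Λ` of a subspace of `W^∞(Λ,T)`: all total maps `⊗T → Λ` obtained by
substituting letters for all the variables of `Q`. -/
def spanInf {Λ : Type} {d : ℕ} {V : Fin (d + 1) → TreeT} (Q : InfSubspace Λ V) :
    Set (LP V → Λ) :=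
  {A | ∃ a : LP V → Λ, A = fun x => Sum.elim id a (Q.Q x)}

/-- The product topology on `W^∞(Λ,T)` coming from the discrete topology on `Λ`. -/
def infTop (Λ : Type) {d : ℕ} (V : Fin (d + 1) → TreeT) :
    TopologicalSpace (LP V → Λ) :=
  @Pi.topologicalSpace (LP V) (fun _ => Λ) (fun _ => ⊥)

/-!
Pull the colouring back along the substitution map `a ↦ Q.subst a`, which is continuous on the
compact second countable space `⊗T → Λ`. Souslin measurable sets have the Baire property
(Nikodym), so some colour class contains `u ∩ ⋂ₙ Uₙ` for a nonempty open `u` and dense open `Uₙ`.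
A fusion argument then fixes letters `g` for all variables except those on an infinite set `S` of
levels of `D`, so that every substitution agreeing with `g` off `S` lies in `u ∩ ⋂ₙ Uₙ`: at
stage `n` a new level is chosen above all coordinates fixed so far, and the fixed coordinates are
extended to a basic open set inside `Uₙ` uniformly in the (finitely many) values on the levels
already chosen. Keeping only the variables of `Q` on the levels in `S` gives `Q'`.
-/

open Set Filter Topology TopologicalSpace

section BaireCategory

variable {α : Type*} [TopologicalSpace α] {s t : Set α}

lemma isMeagre_diff_of_residualEq (h : s =ᵇ t) : IsMeagre (s \ t) := by
  filter_upwards [eventuallyEq_set.1 h] with x hx ⟨hs, ht⟩ using ht (hx.1 hs)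

lemma residualEq_of_subset_of_isMeagre_diff (hts : t ⊆ s) (h : IsMeagre (s \ t)) : s =ᵇ t := by
  filter_upwards [h] with x hx
  exact propext ⟨fun hs => by_contra fun ht => hx ⟨hs, ht⟩, fun ht => hts ht⟩

lemma exists_baireMeasurableSet_hull [SecondCountableTopology α] (E : Set α) :
    ∃ H, BaireMeasurableSet H ∧ E ⊆ H ∧
      ∀ Z, BaireMeasurableSet Z → Z ⊆ H \ E → IsMeagre Z := by
  set 𝒱 : Set (Set α) := {V ∈ countableBasis α | IsMeagre (E ∩ V)}
  set W := ⋃₀ 𝒱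
  have hW : IsOpen W := isOpen_sUnion fun V hV => isOpen_of_mem_countableBasis hV.1
  have h𝒱 : 𝒱.Countable := (countable_countableBasis α).mono (sep_subset _ _)
  have hEW : IsMeagre (E ∩ W) := by
    refine (isMeagre_biUnion h𝒱 (f := fun V => E ∩ V) fun V hV => hV.2).mono ?_
    exact fun x ⟨hxE, V, hV, hxV⟩ => mem_biUnion hV ⟨hxE, hxV⟩
  refine ⟨Wᶜ ∪ (E ∩ W), hW.baireMeasurableSet.compl.union hEW.baireMeasurableSet,
    fun x hx => (em (x ∈ W)).elim (fun h => Or.inr ⟨hx, h⟩) Or.inl, fun Z hZ hZH => ?_⟩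
  obtain ⟨u, hu, hZu⟩ := hZ.residualEq_isOpen
  -- `u ∖ Z` is meagre and disjoint from `E`, so every basic open set inside `u` lies in `W`.
  have huW : u ⊆ W := fun x hx => by
    obtain ⟨V, hV, hxV, hVu⟩ := (isBasis_countableBasis α).exists_subset_of_mem_open hx hu
    refine mem_sUnion_of_mem hxV ⟨hV, (isMeagre_diff_of_residualEq hZu.symm).mono ?_⟩
    exact fun y hy => ⟨hVu hy.2, fun hyZ => (hZH hyZ).2 hy.1⟩
  refine (isMeagre_diff_of_residualEq hZu).mono fun x hx => ?_
  obtain ⟨hxH, hxE⟩ := hZH hx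
  refine ⟨hx, fun hxu => ?_⟩
  exact hxH.elim (· (huW hxu)) fun h => hxE h.1

lemma exists_eventually_eq_on_nonempty_isOpen [BaireSpace α] [Nonempty α] {ι : Type*} [Countable ι]
    (c : α → ι) (hc : ∀ γ, BaireMeasurableSet (c ⁻¹' {γ})) :
    ∃ γ u, IsOpen u ∧ u.Nonempty ∧ ∀ᶠ x in residual α, x ∈ u → c x = γ := by
  obtain ⟨γ, hγ⟩ : ∃ γ, ¬IsMeagre (c ⁻¹' {γ}) := by
    by_contra! h
    have := dense_of_mem_residual (isMeagre_iUnion h)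
    rw [← preimage_iUnion, iUnion_of_singleton, preimage_univ, compl_univ] at this
    exact not_nonempty_empty this.nonempty
  obtain ⟨u, hu, hγu⟩ := (hc γ).residualEq_isOpen
  refine ⟨γ, u, hu, nonempty_iff_ne_empty.2 fun hu0 => hγ ?_, ?_⟩
  · simpa [hu0] using isMeagre_diff_of_residualEq hγu
  · filter_upwards [eventuallyEq_set.1 hγu] with x hx hxu using hx.2 hxu

end BaireCategory

section Souslin

variable {α : Type}

def souslinTail (s : List ℕ → Set α) (l : List ℕ) : Set α :=
  ⋃ σ : ℕ → ℕ, ⋂ n, s (l ++ (List.range n).map σ)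

lemma souslinTail_nil (s : List ℕ → Set α) : souslinTail s [] = souslinOp s := by
  simp [souslinTail, souslinOp]

lemma souslinTail_subset (s : List ℕ → Set α) (l : List ℕ) : souslinTail s l ⊆ s l := fun x hx => by
  obtain ⟨σ, hσ⟩ := mem_iUnion.1 hx
  simpa using mem_iInter.1 hσ 0

lemma souslinTail_subset_iUnion (s : List ℕ → Set α) (l : List ℕ) :
    souslinTail s l ⊆ ⋃ m, souslinTail s (l ++ [m]) := fun x hx => by
  obtain ⟨σ, hσ⟩ := mem_iUnion.1 hx
  refine mem_iUnion.2 ⟨σ 0, mem_iUnion.2 ⟨fun n => σ (n + 1), mem_iInter.2 fun n => ?_⟩⟩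
  have := mem_iInter.1 hσ (n + 1)
  rw [List.range_succ_eq_map, List.map_cons, List.map_map] at this
  simpa [Function.comp_def] using this

lemma exists_branch {P : List ℕ → Prop} (h₀ : P []) (h : ∀ l, P l → ∃ m, P (l ++ [m])) :
    ∃ σ : ℕ → ℕ, ∀ n, P ((List.range n).map σ) := by
  choose! next hnext using h
  let path : ℕ → List ℕ := fun n => Nat.rec [] (fun _ l => l ++ [next l]) n
  have hpath : ∀ n, path n = (List.range n).map (fun k => next (path k)) := fun n => by
    induction n with
    | zero => rfl
    | succ n ih => rw [List.range_succ, List.map_append, ← ih]; rfl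
  refine ⟨fun k => next (path k), fun n => hpath n ▸ ?_⟩
  induction n with
  | zero => exact h₀
  | succ n ih => exact hnext _ ih

/-- Nikodym's theorem. -/
theorem baireMeasurableSet_souslinOp [TopologicalSpace α] [SecondCountableTopology α]
    {s : List ℕ → Set α} (hs : ∀ l, BaireMeasurableSet (s l)) :
    BaireMeasurableSet (souslinOp s) := by
  choose H₀ hH₀ hTH₀ hmin using fun l => exists_baireMeasurableSet_hull (souslinTail s l)
  set H := fun l => H₀ l ∩ s l
  have hH : ∀ l, BaireMeasurableSet (H l) := fun l => (hH₀ l).inter (hs l)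
  have hTH : ∀ l, souslinTail s l ⊆ H l := fun l x hx => ⟨hTH₀ l hx, souslinTail_subset s l hx⟩
  set M := ⋃ l, H l \ ⋃ m, H (l ++ [m])
  have hM : IsMeagre M := isMeagre_iUnion fun l =>
    hmin l _ ((hH l).diff (.iUnion fun m => hH _)) fun x hx => ⟨hx.1.1, fun hxT => hx.2 <| by
      obtain ⟨m, hm⟩ := mem_iUnion.1 (souslinTail_subset_iUnion s l hxT)
      exact mem_iUnion.2 ⟨m, hTH _ hm⟩⟩
  -- off `M`, each `H l` is covered by the `H (l ++ [m])`, so points of `H []` follow a branch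
  have hHM : H [] \ M ⊆ souslinOp s := fun x ⟨hx, hxM⟩ => by
    obtain ⟨σ, hσ⟩ := exists_branch (P := fun l => x ∈ H l) hx fun l hl => by
      by_contra! h
      exact hxM (mem_iUnion.2 ⟨l, hl, fun hx' => by
        obtain ⟨m, hm⟩ := mem_iUnion.1 hx'
        exact h m hm⟩)
    exact mem_iUnion.2 ⟨σ, mem_iInter.2 fun n => (hσ n).2⟩
  refine (hH []).congr (residualEq_of_subset_of_isMeagre_diff ?_ (hM.mono ?_))
  · exact souslinTail_nil s ▸ hTH []
  · exact fun x hx => by_contra fun hxM => hx.2 (hHM ⟨hx.1, hxM⟩)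

end Souslin

theorem SMeas.baireMeasurableSet {α : Type} [τ : TopologicalSpace α] [SecondCountableTopology α]
    {A : Set α} (h : SMeas τ A) : BaireMeasurableSet A :=
  h {B | BaireMeasurableSet B} (fun _ => IsOpen.baireMeasurableSet) (fun _ => .compl)
    (fun _ _ => .union) fun _ => baireMeasurableSet_souslinOp

theorem SMeas.preimage {α β : Type} {τα : TopologicalSpace α} {τβ : TopologicalSpace β}
    {f : α → β} (hf : Continuous[τα, τβ] f) {A : Set β} (h : SMeas τβ A) :
    SMeas τα (f ⁻¹' A) := fun C hopen hcompl hunion hsouslin =>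
  h {B | f ⁻¹' B ∈ C} (fun U hU => hopen _ (hf.isOpen_preimage U hU)) (fun _ => hcompl _)
    (fun _ _ => hunion _ _) fun s hs => by
      simpa [souslinOp, preimage_iUnion, preimage_iInter] using hsouslin _ hs

section Fusion

variable {I Λ : Type*}

def cyl (s : Finset I) (f : I → Λ) : Set (I → Λ) := {a | ∀ i ∈ s, a i = f i}

lemma mem_cyl_self (s : Finset I) (f : I → Λ) : f ∈ cyl s f := fun _ _ => rfl

def stableCore (B : Finset I) (U : Set (I → Λ)) : Set (I → Λ) :=
  {a | ∀ a', (∀ i ∉ B, a' i = a i) → a' ∈ U}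

variable {B : Finset I} {U : Set (I → Λ)}

lemma stableCore_subset : stableCore B U ⊆ U := fun a ha => ha a fun _ _ => rfl

lemma mem_stableCore_of_eq_of_notMem {a a' : I → Λ} (ha : a ∈ stableCore B U)
    (h : ∀ i ∉ B, a' i = a i) : a' ∈ stableCore B U :=
  fun a'' h'' => ha a'' fun i hi => (h'' i hi).trans (h i hi)

open Classical in
noncomputable def override (B : Finset I) (η : B → Λ) (a : I → Λ) : I → Λ :=
  fun i => if h : i ∈ B then η ⟨i, h⟩ else a i

lemma stableCore_eq_iInter (B : Finset I) (U : Set (I → Λ)) :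
    stableCore B U = ⋂ η : B → Λ, override B η ⁻¹' U := by
  ext a
  simp only [stableCore, mem_ofPred_eq, mem_iInter, mem_preimage]
  refine ⟨fun ha η => ha _ fun i hi => dif_neg hi, fun ha a' ha' => ?_⟩
  convert ha fun i => a' i using 1
  funext i
  by_cases hi : i ∈ B
  · simp [override, hi]
  · simp [override, hi, ha' i hi]

variable [TopologicalSpace Λ]

lemma IsOpen.exists_cyl_subset {U : Set (I → Λ)} (hU : IsOpen U) {a : I → Λ} (ha : a ∈ U) :
    ∃ s : Finset I, cyl s a ⊆ U := by
  obtain ⟨s, u, hu, hsU⟩ := isOpen_pi_iff.1 hU a ha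
  exact ⟨s, fun b hb => hsU fun i hi => hb i hi ▸ (hu i hi).2⟩

lemma continuous_override (B : Finset I) (η : B → Λ) : Continuous (override B η) :=
  continuous_pi fun i => by
    by_cases hi : i ∈ B
    · simpa [override, hi] using continuous_const
    · simpa [override, hi] using continuous_apply i

lemma isOpen_stableCore [Finite Λ] (B : Finset I) (hU : IsOpen U) : IsOpen (stableCore B U) :=
  stableCore_eq_iInter B U ▸ isOpen_iInter_of_finite fun η => hU.preimage (continuous_override B η)

variable [DiscreteTopology Λ]

lemma isOpen_cyl (s : Finset I) (f : I → Λ) : IsOpen (cyl s f) := by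
  have : cyl s f = ⋂ i ∈ s, (fun a : I → Λ => a i) ⁻¹' {f i} := by ext; simp [cyl]
  exact this ▸ isOpen_biInter_finset fun i _ => isOpen_discrete _ |>.preimage (continuous_apply i)

lemma Dense.preimage_override (hU : Dense U) (η : B → Λ) : Dense (override B η ⁻¹' U) := by
  classical
  rw [dense_iff_inter_open]
  rintro O hO ⟨a₀, ha₀⟩
  obtain ⟨F, hF⟩ := hO.exists_cyl_subset ha₀
  obtain ⟨y, hy, hyU⟩ := hU.inter_open_nonempty _ (isOpen_cyl (F ∪ B) (override B η a₀))
    ⟨_, mem_cyl_self _ _⟩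
  refine ⟨fun i => if i ∈ B then a₀ i else y i, hF fun i hi => ?_, ?_⟩
  · by_cases hiB : i ∈ B
    · simp [hiB]
    · simp [hiB, hy i (Finset.mem_union_left _ hi), override]
  · have : override B η (fun i => if i ∈ B then a₀ i else y i) = y := funext fun i => by
      by_cases hiB : i ∈ B
      · simp [override, hiB, hy i (Finset.mem_union_right _ hiB)]
      · simp [override, hiB]
    rw [mem_preimage, this]
    exact hyU

lemma dense_stableCore [Finite Λ] (B : Finset I) (hUo : IsOpen U) (hUd : Dense U) :
    Dense (stableCore B U) :=
  stableCore_eq_iInter B U ▸ dense_iInter_of_isOpen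
    (fun η => hUo.preimage (continuous_override B η)) fun η => hUd.preimage_override η

lemma exists_cyl_subset_of_disjoint [Finite Λ] (B : Finset I) (hUo : IsOpen U) (hUd : Dense U)
    {s : Finset I} (f : I → Λ) (hsB : ∀ i ∈ s, i ∉ B) :
    ∃ (s' : Finset I) (z : I → Λ), s ⊆ s' ∧ (∀ i ∈ s', i ∉ B) ∧ z ∈ cyl s f ∧ cyl s' z ⊆ U := by
  classical
  obtain ⟨z, hzs, hzU⟩ := (dense_stableCore B hUo hUd).inter_open_nonempty _ (isOpen_cyl s f)
    ⟨f, mem_cyl_self s f⟩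
  obtain ⟨F, hF⟩ := (isOpen_stableCore B hUo).exists_cyl_subset hzU
  refine ⟨(F ∪ s) \ B, z, fun i hi => Finset.mem_sdiff.2 ⟨Finset.mem_union_right _ hi, hsB i hi⟩,
    fun i hi => (Finset.mem_sdiff.1 hi).2, hzs, fun a ha => stableCore_subset (B := B) ?_⟩
  -- the coordinates of `F` inside `B` are irrelevant, as `stableCore B U` ignores them
  refine mem_stableCore_of_eq_of_notMem (a := fun i => if i ∈ B then z i else a i)
    (hF fun i hi => ?_) fun i hi => by simp [hi]
  by_cases hiB : i ∈ B
  · simp [hiB]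
  · simpa [hiB] using ha i (Finset.mem_sdiff.2 ⟨Finset.mem_union_left _ hi, hiB⟩)

end Fusion

lemma exists_forall_eq_of_monotone {I Λ : Type*} {s : ℕ → Finset I} (hs : Monotone s)
    {f : ℕ → I → Λ} (hf : ∀ n, ∀ i ∈ s n, f (n + 1) i = f n i) :
    ∃ g : I → Λ, ∀ n, ∀ i ∈ s n, g i = f n i := by
  classical
  have hstable : ∀ m n, m ≤ n → ∀ i ∈ s m, f n i = f m i := fun m n hmn i hi => by
    induction n, hmn using Nat.le_induction with
    | base => rfl
    | succ n hmn ih => rw [hf n i (hs hmn hi), ih]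
  refine ⟨fun i => if h : ∃ n, i ∈ s n then f (Nat.find h) i else f 0 i, fun n i hi => ?_⟩
  have h : ∃ n, i ∈ s n := ⟨n, hi⟩
  simp only [dif_pos h]
  exact (hstable _ n (Nat.find_le hi) i (Nat.find_spec h)).symm

section LevelFusion

variable {I Λ : Type*} [TopologicalSpace Λ] [DiscreteTopology Λ] [Finite Λ] {lvl : I → ℕ}
  {S₀ : Set ℕ}

/-- A stage of the fusion: the levels reserved for variables so far, and a basic open set
`cyl dom val` none of whose coordinates lies on a reserved level. -/
structure FusionStage (lvl : I → ℕ) (Λ : Type*) where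
  levels : Finset ℕ
  dom : Finset I
  val : I → Λ
  avoids : ∀ i ∈ dom, lvl i ∉ levels

lemma FusionStage.exists_next (hfin : ∀ n, {i | lvl i = n}.Finite) (hS₀ : S₀.Infinite)
    {U : Set (I → Λ)} (hUo : IsOpen U) (hUd : Dense U) (N : ℕ) (p : FusionStage lvl Λ) :
    ∃ q : FusionStage lvl Λ, (∃ ℓ ∈ S₀, N < ℓ ∧ q.levels = insert ℓ p.levels) ∧
      p.dom ⊆ q.dom ∧ (∀ i ∈ p.dom, q.val i = p.val i) ∧ cyl q.dom q.val ⊆ U := by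
  obtain ⟨ℓ, hℓS₀, hℓ⟩ := hS₀.exists_gt (N + p.dom.sup lvl)
  have hB : (lvl ⁻¹' ↑(insert ℓ p.levels)).Finite :=
    (Finset.finite_toSet _).preimage' fun n _ => hfin n
  obtain ⟨s', z, hss', hs'B, hz, hzU⟩ :=
    exists_cyl_subset_of_disjoint hB.toFinset hUo hUd p.val (s := p.dom) fun i hi hiB => by
      have hle : lvl i ≤ p.dom.sup lvl := Finset.le_sup hi
      rcases Finset.mem_insert.1 (by simpa using hiB) with h | h
      · omega
      · exact p.avoids i hi h
  exact ⟨⟨insert ℓ p.levels, s', z, fun i hi h => hs'B i hi (by simpa using h)⟩,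
    ⟨ℓ, hℓS₀, by omega, rfl⟩, hss', hz, hzU⟩

theorem exists_infinite_free_levels_mem_cyl_iInter (hfin : ∀ n, {i | lvl i = n}.Finite)
    (hS₀ : S₀.Infinite) (U : ℕ → Set (I → Λ)) (hUo : ∀ n, IsOpen (U n)) (hUd : ∀ n, Dense (U n))
    (s₀ : Finset I) (f₀ : I → Λ) :
    ∃ S ⊆ S₀, S.Infinite ∧ ∃ g : I → Λ, ∀ b : I → Λ, (∀ i, lvl i ∉ S → b i = g i) →
      b ∈ cyl s₀ f₀ ∧ ∀ n, b ∈ U n := by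
  choose next hlev hdom hval hcyl using
    fun n => FusionStage.exists_next hfin hS₀ (hUo n) (hUd n) n
  let stage : ℕ → FusionStage lvl Λ :=
    fun n => Nat.rec ⟨∅, s₀, f₀, fun _ _ => Finset.notMem_empty _⟩ next n
  have hstage : ∀ n, stage (n + 1) = next n (stage n) := fun _ => rfl
  have hdom_mono : Monotone fun n => (stage n).dom := monotone_nat_of_le_succ fun n => hdom n _
  have hlev_mono : Monotone fun n => (stage n).levels := monotone_nat_of_le_succ fun n => by
    obtain ⟨ℓ, -, -, h⟩ := hlev n (stage n)
    exact h ▸ Finset.subset_insert _ _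
  obtain ⟨g, hg⟩ := exists_forall_eq_of_monotone (f := fun n => (stage n).val) hdom_mono
    fun n => hval n (stage n)
  refine ⟨⋃ n, ((stage n).levels : Set ℕ), iUnion_subset fun n => ?_,
    infinite_of_forall_exists_gt fun N => ?_, g, fun b hb => ?_⟩
  · induction n with
    | zero => simp [stage]
    | succ n ih =>
      obtain ⟨ℓ, hℓ, -, h⟩ := hlev n (stage n)
      rw [hstage, h, Finset.coe_insert]
      exact insert_subset hℓ ih
  · obtain ⟨ℓ, -, hNℓ, h⟩ := hlev N (stage N)
    exact ⟨ℓ, mem_iUnion.2 ⟨N + 1, by rw [hstage, h]; simp⟩, hNℓ⟩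
  · have hb' : ∀ n, b ∈ cyl (stage n).dom (stage n).val := fun n i hi => by
      refine (hb i fun hiS => ?_).trans (hg n i hi)
      obtain ⟨m, hm⟩ := mem_iUnion.1 hiS
      exact (stage (max n m)).avoids i (hdom_mono (le_max_left n m) hi)
        (hlev_mono (le_max_right n m) hm)
    exact ⟨hb' 0, fun n => hcyl n _ (hb' (n + 1))⟩

theorem exists_infinite_free_levels_mem_inter (hfin : ∀ n, {i | lvl i = n}.Finite)
    (hS₀ : S₀.Infinite) {u : Set (I → Λ)} (hu : IsOpen u) (hne : u.Nonempty) {R : Set (I → Λ)}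
    (hR : R ∈ residual (I → Λ)) :
    ∃ S ⊆ S₀, S.Infinite ∧ ∃ g : I → Λ, ∀ b : I → Λ, (∀ i, lvl i ∉ S → b i = g i) →
      b ∈ u ∩ R := by
  obtain ⟨t, htR, htG, htd⟩ := mem_residual.1 hR
  obtain ⟨U, hUo, rfl⟩ := htG.eq_iInter_nat
  obtain ⟨a, ha⟩ := hne
  obtain ⟨s₀, hs₀⟩ := hu.exists_cyl_subset ha
  obtain ⟨S, hS, hSinf, g, hg⟩ := exists_infinite_free_levels_mem_cyl_iInter hfin hS₀ U hUo
    (fun n => htd.mono (iInter_subset U n)) s₀ a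
  exact ⟨S, hS, hSinf, g, fun b hb => ⟨hs₀ (hg b hb).1, htR (mem_iInter.2 (hg b hb).2)⟩⟩

end LevelFusion

lemma TreeT.finite_setOf_length (T : TreeT) (n : ℕ) : {u | T.mem u ∧ u.length = n}.Finite := by
  induction n with
  | zero => exact (finite_singleton []).subset fun u hu => List.length_eq_zero_iff.1 hu.2
  | succ n ih =>
    refine (ih.biUnion fun s hs => (T.finBranch s hs.1).image (s ++ [·])).subset ?_
    rintro u ⟨hu, hlen⟩
    obtain ⟨s, m, rfl⟩ : ∃ s m, u = s ++ [m] := ⟨u.dropLast, u.getLast (by grind),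
      (List.dropLast_append_getLast _).symm⟩
    exact mem_biUnion ⟨T.pref s m hu, by simpa using hlen⟩ ⟨m, hu, rfl⟩

lemma TreeT.exists_prefix_length (T : TreeT) {u : List ℕ} (hu : T.mem u) {m : ℕ}
    (h : u.length ≤ m) : ∃ w, T.mem w ∧ w.length = m ∧ u <+: w := by
  induction m, h using Nat.le_induction with
  | base => exact ⟨u, hu, rfl, List.prefix_refl u⟩
  | succ m _ ih =>
    obtain ⟨w, hw, hlen, huw⟩ := ih
    obtain ⟨n, hn⟩ := T.noMax w hw
    exact ⟨w ++ [n], hn, by simp [hlen], huw.trans (List.prefix_append w [n])⟩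

lemma finite_setOf_lev_eq (V : Fin (d + 1) → TreeT) (n : ℕ) : {t : LP V | lev t = n}.Finite := by
  refine Finite.of_finite_image ((Finite.pi fun i => (V i).finite_setOf_length n).subset ?_)
    fun t _ s _ h => Subtype.ext h
  rintro _ ⟨t, ht, rfl⟩ i -
  exact ⟨t.2.1 i, (t.2.2 i).trans ht⟩

instance : Countable (LP V) := inferInstanceAs (Countable {t // InLP V t})

def VecSub.restrictLvl (D : VecSub V) (S : Set ℕ) : VecSub V where
  sets i := {u ∈ D.sets i | u.length ∈ S}
  mem i u hu := D.mem i u hu.1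
  lvl i j := by
    have key : ∀ i j n, (∃ u ∈ {u ∈ D.sets i | u.length ∈ S}, u.length = n) →
        ∃ u ∈ {u ∈ D.sets j | u.length ∈ S}, u.length = n := by
      rintro i j n ⟨u, ⟨hu, hn⟩, rfl⟩
      obtain ⟨w, hw, hwu⟩ := (D.lvl i j).subset ⟨u, hu, rfl⟩
      exact ⟨w, ⟨hw, hwu ▸ hn⟩, hwu⟩
    ext n
    exact ⟨key i j n, key j i n⟩

lemma VecSub.lvlSet_restrictLvl (D : VecSub V) (S : Set ℕ) :
    (D.restrictLvl S).lvlSet = D.lvlSet ∩ S := by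
  ext n
  constructor
  · rintro ⟨u, ⟨hu, hn⟩, rfl⟩
    exact ⟨⟨u, hu, rfl⟩, hn⟩
  · rintro ⟨⟨u, hu, rfl⟩, hn⟩
    exact ⟨u, ⟨hu, hn⟩, rfl⟩

lemma mem_lprod_restrictLvl {D : VecSub V} {S : Set ℕ} {t : LP V} :
    t ∈ lprod (D.restrictLvl S) ↔ t ∈ lprod D ∧ lev t ∈ S :=
  ⟨fun h => ⟨fun i => (h i).1, (h 0).2⟩, fun h i => ⟨h.1 i, (t.2.2 i).symm ▸ h.2⟩⟩

lemma VecSub.IsDense.restrictLvl {D : VecSub V} (hD : D.IsDense) {S : Set ℕ}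
    (hS : S ⊆ D.lvlSet) (hSinf : S.Infinite) : (D.restrictLvl S).IsDense := by
  have hlvl : (D.restrictLvl S).lvlSet = S := by
    rw [D.lvlSet_restrictLvl, inter_eq_self_of_subset_right hS]
  classical
  refine ⟨by rwa [hlvl], fun k i u hu hlen => ?_⟩
  have hL : (D.restrictLvl S).L k = Nat.nth (· ∈ S) k := by
    simp only [VecSub.L, hlvl]
  have hLS : (D.restrictLvl S).L k ∈ S := hL ▸ Nat.nth_mem_of_infinite hSinf k
  -- the `k`-th level of `S` is the `m`-th level of `D` for some `m ≥ k`
  set m := Nat.count (· ∈ D.lvlSet) ((D.restrictLvl S).L k)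
  have hDm : D.L m = (D.restrictLvl S).L k := Nat.nth_count (p := (· ∈ D.lvlSet)) (hS hLS)
  have hkm : k ≤ m := calc
    k = Nat.count (· ∈ S) ((D.restrictLvl S).L k) := by
      rw [hL, Nat.count_nth_of_infinite (p := (· ∈ S)) hSinf]
    _ ≤ m := Nat.count_mono_left fun x _ hx => hS hx
  obtain ⟨u', hu', hu'len, huu'⟩ := (V i).exists_prefix_length hu (m := m) (by omega)
  obtain ⟨w, hw, hwlen, hu'w⟩ := hD.2 m i u' hu' hu'len
  exact ⟨w, ⟨hw, hwlen ▸ hDm ▸ hLS⟩, hwlen.trans hDm, huu'.trans hu'w⟩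

namespace InfSubspace

variable {Λ : Type} (Q : InfSubspace Λ V)

/-- The element of `[Q]_Λ` obtained by substituting `a t` for each variable `v_t`. -/
def subst (a : LP V → Λ) : LP V → Λ := fun x => Sum.elim id a (Q.Q x)

lemma continuous_subst [TopologicalSpace Λ] : Continuous Q.subst :=
  continuous_pi fun x => by
    rcases h : Q.Q x with v | t
    · simpa [subst, h] using continuous_const
    · simpa [subst, h] using continuous_apply t

open Classical in
noncomputable def restrictLvlQ (S : Set ℕ) (g : LP V → Λ) (x : LP V) : Λ ⊕ LP V :=
  (Q.Q x).elim Sum.inl fun t => if lev t ∈ S then Sum.inr t else Sum.inl (g t)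

lemma restrictLvlQ_eq_inr {S : Set ℕ} {g : LP V → Λ} {x t : LP V} :
    Q.restrictLvlQ S g x = Sum.inr t ↔ Q.Q x = Sum.inr t ∧ lev t ∈ S := by
  rcases h : Q.Q x with v | t'
  · simp [restrictLvlQ, h]
  · by_cases ht' : lev t' ∈ S
    · simp only [restrictLvlQ, h, Sum.elim_inr, if_pos ht', Sum.inr.injEq]
      exact ⟨fun h => ⟨h, h ▸ ht'⟩, And.left⟩
    · simp only [restrictLvlQ, h, Sum.elim_inr, if_neg ht', reduceCtorEq, false_iff, not_and,
        Sum.inr.injEq]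
      exact fun h => h ▸ ht'

lemma setOf_restrictLvlQ_eq_inr {S : Set ℕ} (g : LP V → Λ) {t : LP V} (ht : lev t ∈ S) :
    {x | Q.restrictLvlQ S g x = Sum.inr t} = {x | Q.Q x = Sum.inr t} := by
  ext x
  simp [Q.restrictLvlQ_eq_inr, ht]

noncomputable def restrictLvl (S : Set ℕ) (hS : S ⊆ Q.D.lvlSet) (hSinf : S.Infinite)
    (g : LP V → Λ) : InfSubspace Λ V where
  Q := Q.restrictLvlQ S g
  D := Q.D.restrictLvl S
  dense := Q.dense.restrictLvl hS hSinf
  varIff t := by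
    simp only [Q.restrictLvlQ_eq_inr, mem_lprod_restrictLvl, ← Q.varIff t]
    exact ⟨fun ⟨x, hx, ht⟩ => ⟨⟨x, hx⟩, ht⟩, fun ⟨⟨x, hx⟩, ht⟩ => ⟨x, hx, ht⟩⟩
  occFin t ht := by
    rw [Q.setOf_restrictLvlQ_eq_inr g (mem_lprod_restrictLvl.1 ht).2]
    exact Q.occFin t (mem_lprod_restrictLvl.1 ht).1
  occMin t ht := by
    obtain ⟨htD, htS⟩ := mem_lprod_restrictLvl.1 ht
    exact ⟨Q.restrictLvlQ_eq_inr.2 ⟨(Q.occMin t htD).1, htS⟩,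
      fun x hx => (Q.occMin t htD).2 x (Q.restrictLvlQ_eq_inr.1 hx).1⟩
  sameLev t ht t' ht' hlev := by
    rw [Q.setOf_restrictLvlQ_eq_inr g (mem_lprod_restrictLvl.1 ht).2,
      Q.setOf_restrictLvlQ_eq_inr g (mem_lprod_restrictLvl.1 ht').2]
    exact Q.sameLev t (mem_lprod_restrictLvl.1 ht).1 t' (mem_lprod_restrictLvl.1 ht').1 hlev
  incLev t ht t' ht' hlev x y hx hy :=
    Q.incLev t (mem_lprod_restrictLvl.1 ht).1 t' (mem_lprod_restrictLvl.1 ht').1 hlev x y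
      (Q.restrictLvlQ_eq_inr.1 hx).1 (Q.restrictLvlQ_eq_inr.1 hy).1

open Classical in
lemma subst_restrictLvl {S : Set ℕ} (hS : S ⊆ Q.D.lvlSet) (hSinf : S.Infinite) (g a : LP V → Λ) :
    (Q.restrictLvl S hS hSinf g).subst a = Q.subst fun t => if lev t ∈ S then a t else g t := by
  funext x
  rcases h : Q.Q x with v | t
  · simp [subst, restrictLvl, restrictLvlQ, h]
  · by_cases ht : lev t ∈ S <;> simp [subst, restrictLvl, restrictLvlQ, h, ht]

lemma spanInf_restrictLvl_subset {S : Set ℕ} (hS : S ⊆ Q.D.lvlSet) (hSinf : S.Infinite)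
    (g : LP V → Λ) : spanInf (Q.restrictLvl S hS hSinf g) ⊆ spanInf Q := by
  rintro _ ⟨a, rfl⟩
  exact ⟨_, Q.subst_restrictLvl hS hSinf g a⟩

end InfSubspace

/-- **Hales–Jewett for words of infinite support.** For every finite Souslin measurable
coloring of `W^∞(Λ,T)` (all maps `⊗T → Λ`, with the product topology) and every subspace
`Q` of `W^∞(Λ,T)`, there is a further subspace `Q' ≤ Q` with `[Q']_Λ` monochromatic. -/
theorem stmt13 {d : ℕ} (Λ : Type) [Finite Λ] (V : Fin (d + 1) → TreeT)
    (r : ℕ) (hr : 0 < r) (c : (LP V → Λ) → Fin r)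
    (hc : ∀ γ : Fin r, SMeas (infTop Λ V) {A | c A = γ})
    (Q : InfSubspace Λ V) :
    ∃ Q' : InfSubspace Λ V,
      spanInf Q' ⊆ spanInf Q ∧
      ∃ γ : Fin r, ∀ A ∈ spanInf Q', c A = γ := by
  rcases isEmpty_or_nonempty (LP V → Λ) with hA | hA
  · exact ⟨Q, subset_rfl, ⟨0, hr⟩, fun A _ => isEmptyElim A⟩
  let _ : TopologicalSpace Λ := ⊥
  have _ : DiscreteTopology Λ := ⟨rfl⟩
  obtain ⟨γ, u, hu, hune, hR⟩ := exists_eventually_eq_on_nonempty_isOpen (c ∘ Q.subst)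
    fun γ => (SMeas.preimage Q.continuous_subst (hc γ)).baireMeasurableSet
  obtain ⟨S, hS, hSinf, g, hg⟩ :=
    exists_infinite_free_levels_mem_inter (finite_setOf_lev_eq V) Q.dense.1 hu hune hR
  refine ⟨Q.restrictLvl S hS hSinf g, Q.spanInf_restrictLvl_subset hS hSinf g, γ, ?_⟩
  classical
  rintro _ ⟨a, rfl⟩
  obtain ⟨hbu, hbR⟩ := hg _ fun t ht => if_neg ht
  change c ((Q.restrictLvl S hS hSinf g).subst a) = γ
  rw [Q.subst_restrictLvl]
  exact hbR hbu
end

section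
/- Let Λ be a finite alphabet, T a vector tree of infinite height, and D a dense vector subset of T. For every finite Souslin measurable coloring of W^∞(Λ,T,D), the set of all maps from ⊗D into Λ with the product topology, and every subspace F of W^∞(Λ,T,D), there exists a further subspace F' ≤ F such that [F']_Λ is monochromatic. -/
set_option autoImplicit false

variable {d : ℕ}

variable {d : ℕ} {V : Fin (d + 1) → TreeT}

/-- The level product `⊗D`, as a type. -/
def lpD {d : ℕ} {V : Fin (d + 1) → TreeT} (D : VecSub V) : Type :=
  {t : LP V // t ∈ lprod D}

/-- The product topology on `W^∞(Λ,T,D)` coming from the discrete topology on `Λ`. -/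
def infTopD (Λ : Type) {d : ℕ} {V : Fin (d + 1) → TreeT} (D : VecSub V) :
    TopologicalSpace (lpD D → Λ) :=
  @Pi.topologicalSpace (lpD D) (fun _ => Λ) (fun _ => ⊥)

/-- A subspace `F` of `W^∞(Λ,T,D)`: the restriction to `⊗D` of a subspace `Q` of
`W^∞(Λ,T)` whose associated dense vector subset `D(Q)` is a vector subset of `D`. -/
structure DSubspace (Λ : Type) {d : ℕ} {V : Fin (d + 1) → TreeT} (D : VecSub V) where
  Q : InfSubspace Λ V
  sub : ∀ i, Q.D.sets i ⊆ D.sets i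

/-- The span `[F]_Λ` of a subspace of `W^∞(Λ,T,D)`: the restrictions to `⊗D` of the
members of the span of the inducing subspace of `W^∞(Λ,T)`. -/
def spanD {Λ : Type} {d : ℕ} {V : Fin (d + 1) → TreeT} {D : VecSub V}
    (F : DSubspace Λ D) : Set (lpD D → Λ) :=
  {B | ∃ A ∈ spanInf F.Q, B = fun t => A t.1}

/-!
Force with *conditions* `(K, b)`: an infinite set `K` of levels of `D(Q)` whose variables stay
free, together with letters `b` for the variables on all other levels. Every condition yields a
subspace `F' ≤ F`, so it suffices to find a condition whose span is monochromatic. Call a set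
*decided* if every condition can be strengthened so that its span lies inside or outside the set.
Decided sets contain the open sets (an open set only looks at finitely many positions, hence at
finitely many levels, which can be frozen) and are closed under complements and finite unions.
They are closed under the Souslin operation by a fusion argument: at stage `n` one more level is
kept free, and each of the finitely many ways of filling the kept levels is pinned to a node of
the Souslin scheme of length `n`; the fusion limit then follows a branch of the scheme along
every point of its span. Finally the finitely many colour classes are decided one after another.
-/

open Set

namespace TreeT

theorem finite_setOf_length_eq (T : TreeT) (n : ℕ) :
    {u | T.mem u ∧ u.length = n}.Finite := by
  induction n with
  | zero => exact (finite_singleton []).subset fun u hu => List.length_eq_zero_iff.mp hu.2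
  | succ n ih =>
    refine (ih.biUnion fun u hu => (T.finBranch u hu.1).image (u ++ [·])).subset ?_
    rintro u ⟨hu, hlen⟩
    obtain ⟨w, m, rfl⟩ := (List.eq_nil_or_concat' u).resolve_left (by rintro rfl; simp at hlen)
    exact mem_biUnion ⟨T.pref w m hu, by simpa using hlen⟩ ⟨m, hu, rfl⟩

theorem exists_prefix_length_eq (T : TreeT) {u : List ℕ} (hu : T.mem u) {m : ℕ}
    (hm : u.length ≤ m) : ∃ w, T.mem w ∧ w.length = m ∧ u <+: w := by
  induction m, hm using Nat.le_induction with
  | base => exact ⟨u, hu, rfl, List.prefix_refl u⟩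
  | succ m _ ih =>
    obtain ⟨w, hw, rfl, huw⟩ := ih
    obtain ⟨k, hk⟩ := T.noMax w hw
    exact ⟨w ++ [k], hk, by simp, huw.trans (List.prefix_append _ _)⟩

end TreeT

theorem finite_lev_preimage {R : Set ℕ} (hR : R.Finite) : (lev ⁻¹' R : Set (LP V)).Finite := by
  refine hR.preimage' fun n _ => ?_
  refine ((Set.Finite.pi fun i => (V i).finite_setOf_length_eq n).preimage
    Subtype.val_injective.injOn).subset ?_
  rintro s (hs : lev s = n) i -
  exact ⟨s.2.1 i, (s.2.2 i).trans hs⟩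

theorem lev_le_lev_of_lpLE {t s : LP V} (h : lpLE t s) : lev t ≤ lev s := (h 0).length_le

theorem exists_seq_of_forall_exists_succ {α : Type*} {p : ℕ → α → Prop} {r : α → α → Prop}
    {a₀ : α} (h₀ : p 0 a₀) (h : ∀ n a, p n a → ∃ a', p (n + 1) a' ∧ r a a') :
    ∃ f : ℕ → α, f 0 = a₀ ∧ (∀ n, p n (f n)) ∧ ∀ n, r (f n) (f (n + 1)) := by
  choose! g hg using h
  let f : ℕ → α := fun n => Nat.rec a₀ g n
  have hf : ∀ n, p n (f n) := by
    intro n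
    induction n with
    | zero => exact h₀
    | succ n ih => exact (hg n _ ih).1
  exact ⟨f, rfl, hf, fun n => (hg n _ (hf n)).2⟩

theorem exists_forall_eq_map_range {β : Type*} {l : ℕ → List β} (h₀ : l 0 = [])
    (h : ∀ n, ∃ b, l (n + 1) = l n ++ [b]) : ∃ σ : ℕ → β, ∀ n, l n = (List.range n).map σ := by
  choose σ hσ using h
  refine ⟨σ, fun n => ?_⟩
  induction n with
  | zero => simp [h₀]
  | succ n ih => simp [hσ, ih, List.range_succ]

theorem exists_finite_forall_eqOn {α β : Type*} [Finite β] [Nonempty β] {A : Set α}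
    (hA : A.Finite) : ∃ E : Set (α → β), E.Finite ∧ ∀ f : α → β, ∃ g ∈ E, EqOn f g A := by
  classical
  have := hA.to_subtype
  refine ⟨range fun r : A → β => fun x => if h : x ∈ A then r ⟨x, h⟩ else Classical.arbitrary β,
    finite_range _, fun f => ⟨_, mem_range_self fun x : A => f x, fun x hx => by simp [hx]⟩⟩

theorem exists_finset_forall_eqOn_mem {ι β : Type*} [TopologicalSpace β] [DiscreteTopology β]
    {S : Set (ι → β)} (hS : IsOpen S) {x : ι → β} (hx : x ∈ S) :
    ∃ I : Finset ι, ∀ y, EqOn y x I → y ∈ S := by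
  obtain ⟨I, u, hu, hIu⟩ := isOpen_pi_iff.mp hS x hx
  exact ⟨I, fun y hy => hIu fun i hi => (hy hi).symm ▸ (hu i hi).2⟩

section Souslin

variable {α : Type} (s : List ℕ → Set α)

def souslinFrom (l : List ℕ) : Set α := ⋃ σ : ℕ → ℕ, ⋂ n, s (l ++ (List.range n).map σ)

theorem souslinFrom_nil : souslinFrom s [] = souslinOp s := rfl

theorem souslinFrom_subset (l : List ℕ) : souslinFrom s l ⊆ s l := fun _ hx => by
  obtain ⟨σ, hσ⟩ := mem_iUnion.mp hx
  simpa using mem_iInter.mp hσ 0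

theorem souslinFrom_subset_iUnion (l : List ℕ) :
    souslinFrom s l ⊆ ⋃ m, souslinFrom s (l ++ [m]) := fun _ hx => by
  obtain ⟨σ, hσ⟩ := mem_iUnion.mp hx
  refine mem_iUnion.mpr ⟨σ 0, mem_iUnion.mpr ⟨fun n => σ (n + 1), mem_iInter.mpr fun n => ?_⟩⟩
  simpa [List.range_succ_eq_map, Function.comp_def] using mem_iInter.mp hσ (n + 1)

end Souslin

namespace VecSub

theorem setOf_exists_length_sep (A : Set (List ℕ)) (K : Set ℕ) :
    {n | ∃ u ∈ {u ∈ A | u.length ∈ K}, u.length = n} = {n | ∃ u ∈ A, u.length = n} ∩ K := by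
  ext n
  constructor
  · rintro ⟨u, ⟨hu, hK⟩, rfl⟩
    exact ⟨⟨u, hu, rfl⟩, hK⟩
  · rintro ⟨⟨u, hu, rfl⟩, hK⟩
    exact ⟨u, ⟨hu, hK⟩, rfl⟩

def onLevels (D : VecSub V) (K : Set ℕ) : VecSub V where
  sets i := {u ∈ D.sets i | u.length ∈ K}
  mem i _ hu := D.mem i _ hu.1
  lvl i j := by rw [setOf_exists_length_sep, setOf_exists_length_sep, D.lvl i j]

theorem lvlSet_onLevels (D : VecSub V) (K : Set ℕ) :
    (D.onLevels K).lvlSet = D.lvlSet ∩ K :=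
  setOf_exists_length_sep _ _

theorem mem_lprod_onLevels {D : VecSub V} {K : Set ℕ} {t : LP V} :
    t ∈ lprod (D.onLevels K) ↔ t ∈ lprod D ∧ lev t ∈ K :=
  ⟨fun h => ⟨fun i => (h i).1, (h 0).2⟩, fun h i => ⟨h.1 i, (t.2.2 i).symm ▸ h.2⟩⟩

theorem IsDense.onLevels {D : VecSub V} (hD : D.IsDense) {K : Set ℕ} (hKD : K ⊆ D.lvlSet)
    (hK : K.Infinite) : (D.onLevels K).IsDense := by
  classical
  have hL : (D.onLevels K).lvlSet = K := by rw [lvlSet_onLevels, inter_eq_right.mpr hKD]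
  refine ⟨by rwa [hL], fun k i u hu hlen => ?_⟩
  set n := Nat.nth (· ∈ K) k
  have hnK : n ∈ K := Nat.nth_mem_of_infinite hK k
  set m := Nat.count (· ∈ D.lvlSet) n
  have hkm : k ≤ m :=
    Nat.count_nth_of_infinite (p := (· ∈ K)) hK k ▸ Nat.count_mono_left fun x _ hx => hKD hx
  obtain ⟨u', hu', hu'len, huu'⟩ := (V i).exists_prefix_length_eq hu (hlen ▸ hkm)
  obtain ⟨w, hw, hwlen, hu'w⟩ := hD.2 m i u' hu' hu'len
  have hDm : D.L m = n := Nat.nth_count (p := (· ∈ D.lvlSet)) (hKD hnK)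
  have hLk : (D.onLevels K).L k = n := by simp only [VecSub.L, hL, n]
  exact ⟨w, ⟨hw, by rw [hwlen, hDm]; exact hnK⟩, by rw [hwlen, hDm, hLk], huu'.trans hu'w⟩

end VecSub

namespace InfSubspace

variable {Λ : Type} (Q : InfSubspace Λ V)

open Classical in
noncomputable def freezeMap (K : Set ℕ) (b : LP V → Λ) (x : LP V) : Λ ⊕ LP V :=
  Sum.elim Sum.inl (fun t => if lev t ∈ K then Sum.inr t else Sum.inl (b t)) (Q.Q x)

variable {Q}

theorem freezeMap_eq_inr {K : Set ℕ} {b : LP V → Λ} {x t : LP V} :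
    Q.freezeMap K b x = Sum.inr t ↔ Q.Q x = Sum.inr t ∧ lev t ∈ K := by
  unfold freezeMap
  cases Q.Q x with
  | inl => simp
  | inr s => by_cases hs : lev s ∈ K <;> simp [hs] <;> rintro rfl <;> exact hs

theorem setOf_freezeMap_eq_inr {K : Set ℕ} {b : LP V → Λ} {t : LP V} (ht : lev t ∈ K) :
    {x | Q.freezeMap K b x = Sum.inr t} = {x | Q.Q x = Sum.inr t} := by
  simp [freezeMap_eq_inr, ht]

open Classical in
theorem elim_freezeMap (K : Set ℕ) (b a : LP V → Λ) (x : LP V) :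
    Sum.elim id a (Q.freezeMap K b x) =
      Sum.elim id (fun s => if lev s ∈ K then a s else b s) (Q.Q x) := by
  unfold freezeMap
  cases Q.Q x with
  | inl => rfl
  | inr s => by_cases hs : lev s ∈ K <;> simp [hs]

variable (Q)

noncomputable def freeze (K : Set ℕ) (hKD : K ⊆ Q.D.lvlSet) (hK : K.Infinite) (b : LP V → Λ) :
    InfSubspace Λ V where
  Q := Q.freezeMap K b
  D := Q.D.onLevels K
  dense := Q.dense.onLevels hKD hK
  varIff t := by
    simp only [freezeMap_eq_inr, exists_and_right, VecSub.mem_lprod_onLevels, Q.varIff]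
  occFin t ht := by
    obtain ⟨htD, htK⟩ := VecSub.mem_lprod_onLevels.mp ht
    rw [setOf_freezeMap_eq_inr htK]
    exact Q.occFin t htD
  occMin t ht := by
    obtain ⟨htD, htK⟩ := VecSub.mem_lprod_onLevels.mp ht
    exact ⟨freezeMap_eq_inr.mpr ⟨(Q.occMin t htD).1, htK⟩,
      fun x hx => (Q.occMin t htD).2 x (freezeMap_eq_inr.mp hx).1⟩
  sameLev t ht t' ht' h := by
    obtain ⟨htD, htK⟩ := VecSub.mem_lprod_onLevels.mp ht
    obtain ⟨ht'D, ht'K⟩ := VecSub.mem_lprod_onLevels.mp ht'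
    rw [setOf_freezeMap_eq_inr htK, setOf_freezeMap_eq_inr ht'K]
    exact Q.sameLev t htD t' ht'D h
  incLev t ht t' ht' h x y hx hy :=
    Q.incLev t (VecSub.mem_lprod_onLevels.mp ht).1 t' (VecSub.mem_lprod_onLevels.mp ht').1 h x y
      (freezeMap_eq_inr.mp hx).1 (freezeMap_eq_inr.mp hy).1

end InfSubspace

namespace DSubspace

variable {Λ : Type} {D : VecSub V} (F : DSubspace Λ D)

def subst (a : LP V → Λ) : lpD D → Λ := fun t => Sum.elim id a (F.Q.Q t.1)

theorem subst_apply_congr {a a' : LP V → Λ} {t : lpD D}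
    (h : ∀ s, lev s ≤ lev t.1 → a s = a' s) : F.subst a t = F.subst a' t := by
  unfold subst
  cases hQ : F.Q.Q t.1 with
  | inl => rfl
  | inr s => exact h s (lev_le_lev_of_lpLE ((F.Q.occMin s ((F.Q.varIff s).mp ⟨_, hQ⟩)).2 _ hQ))

/-- A condition keeps the variables on the levels in `K` free and fixes those on the other
levels to the letters of `b`. -/
structure Condition where
  K : Set ℕ
  b : LP V → Λ
  K_subset : K ⊆ F.Q.D.lvlSet
  K_infinite : K.Infinite

variable {F}

namespace Condition

instance : Preorder F.Condition where
  le c' c := c'.K ⊆ c.K ∧ EqOn c'.b c.b (lev ⁻¹' c.Kᶜ)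
  le_refl c := ⟨subset_rfl, eqOn_refl _ _⟩
  le_trans c₁ c₂ c₃ h₁₂ h₂₃ :=
    ⟨h₁₂.1.trans h₂₃.1, fun s hs => (h₁₂.2 fun h => hs (h₂₃.1 h)).trans (h₂₃.2 hs)⟩

def admissible (c : F.Condition) : Set (LP V → Λ) := {a | EqOn a c.b (lev ⁻¹' c.Kᶜ)}

def span (c : F.Condition) : Set (lpD D → Λ) := F.subst '' c.admissible

theorem admissible_mono {c c' : F.Condition} (h : c' ≤ c) : c'.admissible ⊆ c.admissible :=
  fun _ ha _ hs => (ha fun h' => hs (h.1 h')).trans (h.2 hs)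

theorem span_mono {c c' : F.Condition} (h : c' ≤ c) : c'.span ⊆ c.span :=
  image_mono (admissible_mono h)

theorem span_nonempty (c : F.Condition) : c.span.Nonempty :=
  ⟨_, c.b, eqOn_refl _ _, rfl⟩

theorem span_subset_spanD (c : F.Condition) : c.span ⊆ spanD F := by
  rintro _ ⟨a, -, rfl⟩
  exact ⟨_, ⟨a, rfl⟩, rfl⟩

noncomputable def toDSubspace (c : F.Condition) : DSubspace Λ D where
  Q := F.Q.freeze c.K c.K_subset c.K_infinite c.b
  sub i _ hu := F.sub i hu.1

theorem spanD_toDSubspace_subset (c : F.Condition) : spanD c.toDSubspace ⊆ c.span := by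
  classical
  rintro _ ⟨_, ⟨a, rfl⟩, rfl⟩
  exact ⟨fun s => if lev s ∈ c.K then a s else c.b s, fun s hs => if_neg hs,
    funext fun t => (F.Q.elim_freezeMap c.K c.b a t.1).symm⟩

def fix (c : F.Condition) (R : Finset ℕ) (ε : LP V → Λ) : F.Condition where
  K := c.K \ R
  b s := if lev s ∈ R then ε s else c.b s
  K_subset := sdiff_subset.trans c.K_subset
  K_infinite := c.K_infinite.sdiff R.finite_toSet

variable {c c' : F.Condition} {R R' : Finset ℕ}

theorem fix_le (hR : ↑R ⊆ c.K) (ε : LP V → Λ) : c.fix R ε ≤ c :=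
  ⟨sdiff_subset, fun _ hs => if_neg fun h => hs (hR h)⟩

theorem fix_mono (h : c' ≤ c) (hRR' : R ⊆ R') (hR' : ↑R' ⊆ c'.K) (ε : LP V → Λ) :
    c'.fix R' ε ≤ c.fix R ε := by
  refine ⟨fun n hn => ⟨h.1 hn.1, fun hnR => hn.2 (hRR' hnR)⟩, fun s hs => ?_⟩
  by_cases hsR : lev s ∈ R
  · simp [fix, hsR, hRR' hsR]
  · have hsK : lev s ∉ c.K := fun hsK => hs ⟨hsK, hsR⟩
    have hsR' : lev s ∉ R' := fun h' => hsK (h.1 (hR' h'))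
    simp only [fix, if_neg hsR, if_neg hsR']
    exact h.2 hsK

theorem fix_congr {ε ε' : LP V → Λ} (h : EqOn ε ε' (lev ⁻¹' R)) : c.fix R ε = c.fix R ε' := by
  simp only [fix, Condition.mk.injEq, true_and]
  funext s
  split_ifs with hs
  exacts [h hs, rfl]

theorem mem_admissible_fix {a : LP V → Λ} (ha : a ∈ c.admissible) :
    a ∈ (c.fix R a).admissible := fun s hs => by
  by_cases hsR : lev s ∈ R
  · simp [fix, hsR]
  · simp only [fix, if_neg hsR]
    exact ha fun hsK => hs ⟨hsK, hsR⟩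

theorem subst_mem_span_fix (h : c' ≤ c) (hR : ↑R ⊆ c'.K) {a : LP V → Λ}
    (ha : a ∈ c'.admissible) : F.subst a ∈ (c.fix R a).span :=
  span_mono (fix_mono h subset_rfl hR a) ⟨a, mem_admissible_fix ha, rfl⟩

theorem exists_le_fix_le {P Z : F.Condition} (hR : ↑R ⊆ P.K) {ε : LP V → Λ}
    (hZ : Z ≤ P.fix R ε) :
    ∃ P' ≤ P, ↑R ⊆ P'.K ∧ P'.fix R ε ≤ Z ∧ ∀ ε', P'.fix R ε' ≤ P.fix R ε' := by
  have hZK : Z.K ⊆ P.K \ R := hZ.1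
  have hZb : ∀ s, lev s ∉ P.K → Z.b s = P.b s :=
    fun s hs => (hZ.2 fun h => hs h.1).trans (if_neg fun h => hs (hR h))
  -- `Z` with the levels `R` reopened, so that fixing them to `ε` gives back `Z`
  let P' : F.Condition := ⟨Z.K ∪ R, fun s => if lev s ∈ R then P.b s else Z.b s,
    union_subset Z.K_subset (hR.trans P.K_subset), Z.K_infinite.mono subset_union_left⟩
  have hP'b : ∀ s, lev s ∉ P.K → P'.b s = P.b s :=
    fun s hs => (if_neg fun h => hs (hR h)).trans (hZb s hs)
  refine ⟨P', ⟨union_subset (hZK.trans sdiff_subset) hR, hP'b⟩, subset_union_right,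
    ⟨?_, fun s hs => ?_⟩, fun ε' => ⟨?_, fun s hs => ?_⟩⟩
  · rintro n ⟨hn | hn, hnR⟩
    exacts [hn, absurd hn hnR]
  · by_cases hsR : lev s ∈ R
    · rw [hZ.2 fun h => h.2 hsR]
      simp [fix, hsR]
    · simp [fix, P', hsR]
  · rintro n ⟨hn | hn, hnR⟩
    exacts [⟨(hZK hn).1, hnR⟩, absurd hn hnR]
  · by_cases hsR : lev s ∈ R
    · simp [fix, hsR]
    · simp only [fix, if_neg hsR]
      exact hP'b s fun h => hs ⟨h, hsR⟩

theorem exists_le_forall_mem_fix {ψ : (LP V → Λ) → F.Condition → Prop}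
    (hψ : ∀ ε {c c'}, c' ≤ c → ψ ε c → ψ ε c') {P : F.Condition} (hR : ↑R ⊆ P.K)
    (hdense : ∀ ε, ∀ Z ≤ P.fix R ε, ∃ Z' ≤ Z, ψ ε Z') {E : Set (LP V → Λ)} (hE : E.Finite) :
    ∃ P' ≤ P, ↑R ⊆ P'.K ∧ ∀ ε ∈ E, ψ ε (P'.fix R ε) := by
  induction E, hE using Set.Finite.induction_on with
  | empty => exact ⟨P, le_rfl, hR, by simp⟩
  | @insert ε E _ _ ih =>
    obtain ⟨P₁, hP₁, hR₁, hE₁⟩ := ih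
    obtain ⟨Z, hZ, hψZ⟩ := hdense ε _ (fix_mono hP₁ subset_rfl hR₁ ε)
    obtain ⟨P₂, hP₂, hR₂, hεZ, hfix⟩ := exists_le_fix_le hR₁ hZ
    refine ⟨P₂, hP₂.trans hP₁, hR₂, ?_⟩
    rintro ε' (rfl | hε')
    exacts [hψ _ hεZ hψZ, hψ _ (hfix ε') (hE₁ ε' hε')]

theorem exists_le_forall_fix [Finite Λ] [Nonempty Λ] {ψ : (LP V → Λ) → F.Condition → Prop}
    (hψ : ∀ ε {c c'}, c' ≤ c → ψ ε c → ψ ε c')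
    (hψR : ∀ {ε ε'} c, EqOn ε ε' (lev ⁻¹' R) → ψ ε c → ψ ε' c) {P : F.Condition}
    (hR : ↑R ⊆ P.K) (hdense : ∀ ε, ∀ Z ≤ P.fix R ε, ∃ Z' ≤ Z, ψ ε Z') :
    ∃ P' ≤ P, ↑R ⊆ P'.K ∧ ∀ ε, ψ ε (P'.fix R ε) := by
  obtain ⟨E, hE, hErep⟩ := exists_finite_forall_eqOn (β := Λ) (finite_lev_preimage (V := V)
    R.finite_toSet)
  obtain ⟨P', hP', hR', hψE⟩ := exists_le_forall_mem_fix hψ hR hdense hE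
  refine ⟨P', hP', hR', fun ε => ?_⟩
  obtain ⟨ε', hε', hεε'⟩ := hErep ε
  rw [fix_congr hεε']
  exact hψR _ hεε'.symm (hψE ε' hε')

theorem exists_fusion_step [Finite Λ] [Nonempty Λ] {ψ : (LP V → Λ) → F.Condition → Prop}
    (hψ : ∀ ε {c c'}, c' ≤ c → ψ ε c → ψ ε c')
    (hψR : ∀ {ε ε'} c, EqOn ε ε' (lev ⁻¹' R) → ψ ε c → ψ ε' c) {P : F.Condition}
    (hR : ↑R ⊆ P.K) (hdense : ∀ ε, ∀ Z ≤ P.fix R ε, ∃ Z' ≤ Z, ψ ε Z') :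
    ∃ P' ≤ P, ∃ R' : Finset ℕ, R ⊆ R' ∧ R.card < R'.card ∧ ↑R' ⊆ P'.K ∧
      ∀ ε, P'.fix R' ε ≤ P.fix R ε ∧ ψ ε (P'.fix R' ε) := by
  obtain ⟨k, hkK, hkR⟩ := (P.K_infinite.sdiff R.finite_toSet).nonempty
  have hRk : R ⊆ insert k R := Finset.subset_insert k R
  have hRkP : ↑(insert k R) ⊆ P.K := by
    rw [Finset.coe_insert]
    exact insert_subset hkK hR
  obtain ⟨P', hP', hR', hψ'⟩ := exists_le_forall_fix hψ
    (fun c h => hψR c (h.mono (preimage_mono (Finset.coe_subset.mpr hRk)))) hRkP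
    (fun ε Z hZ => hdense ε Z (hZ.trans (fix_mono le_rfl hRk hRkP ε)))
  exact ⟨P', hP', insert k R, hRk, Finset.card_lt_card (Finset.ssubset_insert hkR), hR',
    fun ε => ⟨fix_mono hP' hRk hR' ε, hψ' ε⟩⟩

theorem exists_forall_le_of_fusion {P : ℕ → F.Condition} {R : ℕ → Finset ℕ} (hP : Antitone P)
    (hR : Monotone R) (hRP : ∀ n, ↑(R n) ⊆ (P n).K) (hcard : ∀ n, n ≤ (R n).card) :
    ∃ P' : F.Condition, ∀ n, P' ≤ P n ∧ ↑(R n) ⊆ P'.K := by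
  classical
  have hK : ∀ n, (⋃ m, (R m : Set ℕ)) ⊆ (P n).K := fun n => iUnion_subset fun m => by
    rcases le_total n m with h | h
    exacts [(hRP m).trans (hP h).1, (Finset.coe_subset.mpr (hR h)).trans (hRP n)]
  have hinf : (⋃ m, (R m : Set ℕ)).Infinite := fun hfin => by
    have hsub : R (hfin.toFinset.card + 1) ⊆ hfin.toFinset :=
      fun x hx => hfin.mem_toFinset.mpr (mem_iUnion_of_mem _ hx)
    have := Finset.card_le_card hsub
    have := hcard (hfin.toFinset.card + 1)
    omega
  -- once a level leaves some `(P n).K`, the letters on it never change again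
  refine ⟨⟨⋃ m, (R m : Set ℕ), fun s => if h : ∃ n, lev s ∉ (P n).K then (P (Nat.find h)).b s
    else (P 0).b s, (hK 0).trans (P 0).K_subset, hinf⟩,
    fun n => ⟨⟨hK n, fun s hs => ?_⟩, subset_iUnion (fun m => (R m : Set ℕ)) n⟩⟩
  have h : ∃ n, lev s ∉ (P n).K := ⟨n, hs⟩
  simp only [dif_pos h]
  exact ((hP (Nat.find_min' h hs)).2 (Nat.find_spec h)).symm

theorem exists_le_fusion {σ : Type*} {p : ℕ → F.Condition → Finset ℕ → σ → Prop}
    {r : σ → σ → Prop} {P₀ : F.Condition} {s₀ : σ} (h₀ : p 0 P₀ ∅ s₀)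
    (hstep : ∀ n P R s, P ≤ P₀ → ↑R ⊆ P.K → p n P R s → ∃ P' ≤ P, ∃ R' s', R ⊆ R' ∧
      R.card < R'.card ∧ ↑R' ⊆ P'.K ∧ p (n + 1) P' R' s' ∧ r s s') :
    ∃ W ≤ P₀, ∃ (P : ℕ → F.Condition) (R : ℕ → Finset ℕ) (s : ℕ → σ), s 0 = s₀ ∧
      ∀ n, p n (P n) (R n) (s n) ∧ W ≤ P n ∧ ↑(R n) ⊆ W.K ∧ r (s n) (s (n + 1)) := by
  obtain ⟨f, hf₀, hf, hfsucc⟩ := exists_seq_of_forall_exists_succ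
    (p := fun n (x : F.Condition × Finset ℕ × σ) =>
      x.1 ≤ P₀ ∧ ↑x.2.1 ⊆ x.1.K ∧ n ≤ x.2.1.card ∧ p n x.1 x.2.1 x.2.2)
    (r := fun x x' => x'.1 ≤ x.1 ∧ x.2.1 ⊆ x'.2.1 ∧ r x.2.2 x'.2.2) (a₀ := (P₀, ∅, s₀))
    ⟨le_rfl, by simp, le_rfl, h₀⟩ fun n x ⟨hP, hR, hn, hx⟩ => by
      obtain ⟨P', hP', R', s', hRR', hcard, hR', hp, hr⟩ := hstep n _ _ _ hP hR hx
      exact ⟨(P', R', s'), ⟨hP'.trans hP, hR', hn.trans_lt hcard, hp⟩, hP', hRR', hr⟩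
  obtain ⟨W, hW⟩ := exists_forall_le_of_fusion (P := fun n => (f n).1) (R := fun n => (f n).2.1)
    (antitone_nat_of_succ_le fun n => (hfsucc n).1)
    (monotone_nat_of_le_succ fun n => (hfsucc n).2.1) (fun n => (hf n).2.1) (fun n => (hf n).2.2.1)
  exact ⟨W, (hW 0).1.trans (by rw [hf₀]), _, _, _, by rw [hf₀],
    fun n => ⟨(hf n).2.2.2, (hW n).1, (hW n).2, (hfsucc n).2.2⟩⟩

theorem exists_le_disjoint_iUnion [Finite Λ] [Nonempty Λ] {X : ℕ → Set (lpD D → Λ)}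
    {Z : F.Condition} (h : ∀ j, ∀ W ≤ Z, ∃ W' ≤ W, Disjoint W'.span (X j)) :
    ∃ W ≤ Z, Disjoint W.span (⋃ j, X j) := by
  obtain ⟨W, hWZ, P, R, -, -, hW⟩ := exists_le_fusion (s₀ := ())
    (p := fun n P R _ => ∀ i < n, ∀ ε, Disjoint (P.fix R ε).span (X i)) (r := fun _ _ => True)
    (by simp) fun n P R _ hPZ hR hdisj => by
      obtain ⟨P', hP', R', hRR', hcard, hR', hfix⟩ := exists_fusion_step
        (ψ := fun _ c => Disjoint c.span (X n)) (fun _ _ _ h hc => hc.mono_left (span_mono h))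
        (fun _ _ hc => hc) hR (fun ε W hW => h n W (hW.trans ((fix_le hR ε).trans hPZ)))
      refine ⟨P', hP', R', (), hRR', hcard, hR', fun i hi ε => ?_, trivial⟩
      rcases Nat.lt_succ_iff_lt_or_eq.mp hi with hi | rfl
      exacts [(hdisj i hi ε).mono_left (span_mono (hfix ε).1), (hfix ε).2]
  refine ⟨W, hWZ, disjoint_iUnion_right.mpr fun j => disjoint_left.mpr ?_⟩
  rintro _ ⟨a, ha, rfl⟩
  obtain ⟨hdisj, hWP, hRW, -⟩ := hW (j + 1)
  exact disjoint_left.mp (hdisj j j.lt_succ_self a) (subst_mem_span_fix hWP hRW ha)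

def MeetsBelow (c : F.Condition) (S : Set (lpD D → Λ)) : Prop := ∀ c' ≤ c, ¬Disjoint c'.span S

variable {S T : Set (lpD D → Λ)}

theorem MeetsBelow.mono (h : c' ≤ c) (hc : c.MeetsBelow S) : c'.MeetsBelow S :=
  fun c'' h'' => hc c'' (h''.trans h)

theorem MeetsBelow.mono_right (hST : S ⊆ T) (hc : c.MeetsBelow S) : c.MeetsBelow T :=
  fun c' h hd => hc c' h (hd.mono_right hST)

theorem MeetsBelow.exists_iUnion [Finite Λ] [Nonempty Λ] {X : ℕ → Set (lpD D → Λ)}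
    {W : F.Condition} (hW : W.MeetsBelow (⋃ j, X j)) : ∃ j, ∃ Z ≤ W, Z.MeetsBelow (X j) := by
  by_contra! h
  obtain ⟨W', hW', hdisj⟩ := exists_le_disjoint_iUnion fun j Z hZ => by
    simpa [MeetsBelow] using h j Z hZ
  exact hW W' hW' hdisj

end Condition

open Condition

def Decides (F : DSubspace Λ D) (S : Set (lpD D → Λ)) : Prop :=
  ∀ P : F.Condition, ∃ Q ≤ P, Q.span ⊆ S ∨ Disjoint Q.span S

variable {S S' T : Set (lpD D → Λ)}

theorem Decides.compl (h : F.Decides S) : F.Decides Sᶜ := fun P => by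
  obtain ⟨Q, hQ, hS | hS⟩ := h P
  exacts [⟨Q, hQ, Or.inr (disjoint_compl_right_iff_subset.mpr hS)⟩,
    ⟨Q, hQ, Or.inl (subset_compl_iff_disjoint_right.mpr hS)⟩]

theorem Decides.union (h : F.Decides S) (h' : F.Decides S') : F.Decides (S ∪ S') := fun P => by
  obtain ⟨Q, hQ, hS | hS⟩ := h P
  · exact ⟨Q, hQ, Or.inl (hS.trans subset_union_left)⟩
  obtain ⟨Q', hQ', hS' | hS'⟩ := h' Q
  · exact ⟨Q', hQ'.trans hQ, Or.inl (hS'.trans subset_union_right)⟩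
  · exact ⟨Q', hQ'.trans hQ, Or.inr (disjoint_union_right.mpr ⟨hS.mono_left (span_mono hQ'), hS'⟩)⟩

theorem decides_of_isOpen (hS : (infTopD Λ D).IsOpen S) : F.Decides S := by
  classical
  intro P
  by_cases hPS : Disjoint P.span S
  · exact ⟨P, le_rfl, Or.inr hPS⟩
  obtain ⟨_, ⟨a₀, ha₀, rfl⟩, hS₀⟩ := not_disjoint_iff.mp hPS
  let _ : TopologicalSpace Λ := ⊥
  have : DiscreteTopology Λ := ⟨rfl⟩
  obtain ⟨I, hI⟩ := exists_finset_forall_eqOn_mem (show IsOpen S from hS) hS₀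
  let N := I.sup fun t => lev t.1
  let R := (Finset.range (N + 1)).filter (· ∈ P.K)
  have hR : ↑R ⊆ P.K := fun n hn => (Finset.mem_filter.mp hn).2
  refine ⟨P.fix R a₀, fix_le hR a₀, Or.inl ?_⟩
  rintro _ ⟨a, ha, rfl⟩
  -- a variable occurring at `t` lies on a level at most `lev t`, which the levels in `R` cover
  refine hI _ fun t ht => F.subst_apply_congr fun s hs => ?_
  have hsN : lev s ≤ N := hs.trans (Finset.le_sup (f := fun t => lev t.1) ht)
  by_cases hsK : lev s ∈ P.K
  · have hsR : lev s ∈ R := Finset.mem_filter.mpr ⟨Finset.mem_range.mpr (by omega), hsK⟩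
    exact (ha fun h => h.2 hsR).trans (if_pos hsR)
  · exact (ha fun h => hsK h.1).trans ((if_neg fun h => hsK (hR h)).trans (ha₀ hsK).symm)

theorem Condition.MeetsBelow.exists_le_span_subset {c : F.Condition} (hc : c.MeetsBelow T)
    (hS : F.Decides S) (hTS : T ⊆ S) : ∃ c' ≤ c, c'.MeetsBelow T ∧ c'.span ⊆ S := by
  obtain ⟨c', hc', hS' | hS'⟩ := hS c
  · exact ⟨c', hc', hc.mono hc', hS'⟩
  · exact absurd (hS'.mono_right hTS) (hc c' hc')

section Souslin

variable (sc : List ℕ → Set (lpD D → Λ))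

def SouslinStage (P : F.Condition) (R : Finset ℕ) (ν : (LP V → Λ) → List ℕ) : Prop :=
  (∀ ε ε', EqOn ε ε' (lev ⁻¹' R) → ν ε = ν ε') ∧
    ∀ ε, (P.fix R ε).MeetsBelow (souslinFrom sc (ν ε)) ∧ (P.fix R ε).span ⊆ sc (ν ε)

theorem exists_souslinStage_succ [Finite Λ] [Nonempty Λ] (hsc : ∀ l, F.Decides (sc l))
    {P : F.Condition} {R : Finset ℕ} {ν : (LP V → Λ) → List ℕ} (hR : ↑R ⊆ P.K)
    (h : F.SouslinStage sc P R ν) :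
    ∃ P' ≤ P, ∃ R' ν', R ⊆ R' ∧ R.card < R'.card ∧ ↑R' ⊆ P'.K ∧
      F.SouslinStage sc P' R' ν' ∧ ∀ ε, ∃ m, ν' ε = ν ε ++ [m] := by
  classical
  obtain ⟨hν, hbox⟩ := h
  let q : List ℕ → F.Condition → ℕ → Prop := fun l c m =>
    c.MeetsBelow (souslinFrom sc (l ++ [m])) ∧ c.span ⊆ sc (l ++ [m])
  obtain ⟨P', hP', R', hRR', hcard, hR', hfix⟩ := exists_fusion_step
    (ψ := fun ε c => ∃ m, q (ν ε) c m)
    (fun _ _ _ hc ⟨m, hm, hsub⟩ => ⟨m, hm.mono hc, (span_mono hc).trans hsub⟩)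
    (fun _ he ⟨m, hm⟩ => ⟨m, hν _ _ he ▸ hm⟩) hR fun ε Z hZ => by
      obtain ⟨m, Z₁, hZ₁, hm⟩ :=
        (((hbox ε).1.mono hZ).mono_right (souslinFrom_subset_iUnion sc _)).exists_iUnion
      obtain ⟨Z₂, hZ₂, hm₂, hsub⟩ := hm.exists_le_span_subset (hsc _) (souslinFrom_subset sc _)
      exact ⟨Z₂, hZ₂.trans hZ₁, m, hm₂, hsub⟩
  refine ⟨P', hP', R', fun ε => ν ε ++ [Nat.find (hfix ε).2], hRR', hcard, hR',
    ⟨fun ε ε' he => ?_, fun ε => Nat.find_spec (hfix ε).2⟩, fun ε => ⟨_, rfl⟩⟩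
  -- the least suitable `m` only depends on the box, hence only on `ε` restricted to `R'`
  have hνε : ν ε = ν ε' := hν ε ε' (he.mono (preimage_mono (Finset.coe_subset.mpr hRR')))
  exact congrArg₂ (· ++ [·]) hνε (Nat.find_congr' fun {m} => by rw [hνε, fix_congr he])

theorem exists_le_span_subset_souslinOp [Finite Λ] [Nonempty Λ] (hsc : ∀ l, F.Decides (sc l))
    {P₀ : F.Condition} (h₀ : F.SouslinStage sc P₀ ∅ fun _ => []) :
    ∃ W ≤ P₀, W.span ⊆ souslinOp sc := by
  obtain ⟨W, hWP₀, P, R, ν, hν₀, hW⟩ := exists_le_fusion (p := fun _ => F.SouslinStage sc)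
    (r := fun ν ν' => ∀ ε, ∃ m, ν' ε = ν ε ++ [m]) h₀
    fun _ _ _ _ _ hR h => exists_souslinStage_succ sc hsc hR h
  refine ⟨W, hWP₀, ?_⟩
  rintro _ ⟨a, ha, rfl⟩
  obtain ⟨σ, hσ⟩ := exists_forall_eq_map_range (l := fun n => ν n a) (by rw [hν₀])
    fun n => (hW n).2.2.2 a
  refine mem_iUnion.mpr ⟨σ, mem_iInter.mpr fun n => ?_⟩
  rw [← hσ n]
  exact ((hW n).1.2 a).2 (subst_mem_span_fix (hW n).2.1 (hW n).2.2.1 ha)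

theorem Decides.souslin [Finite Λ] [Nonempty Λ] (hsc : ∀ l, F.Decides (sc l)) :
    F.Decides (souslinOp sc) := by
  intro P
  by_cases hP : P.MeetsBelow (souslinOp sc)
  · rw [← souslinFrom_nil] at hP
    obtain ⟨P₀, hP₀, hP₀m, hP₀s⟩ := hP.exists_le_span_subset (hsc []) (souslinFrom_subset sc [])
    have h₀ : F.SouslinStage sc P₀ ∅ fun _ => [] := ⟨fun _ _ _ => rfl, fun ε =>
      ⟨hP₀m.mono (fix_le (by simp) ε), (span_mono (fix_le (by simp) ε)).trans hP₀s⟩⟩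
    obtain ⟨W, hW, hWs⟩ := exists_le_span_subset_souslinOp sc hsc h₀
    exact ⟨W, hW.trans hP₀, Or.inl hWs⟩
  · simp only [MeetsBelow, not_forall, not_not] at hP
    obtain ⟨Q, hQ, hQs⟩ := hP
    exact ⟨Q, hQ, Or.inr hQs⟩

end Souslin

theorem Condition.exists_le_forall_span_eq {ι : Type*} {c : (lpD D → Λ) → ι}
    (hc : ∀ i, F.Decides {B | c B = i}) (s : Finset ι) (P : F.Condition)
    (hP : ∀ B ∈ P.span, c B ∈ s) : ∃ Q ≤ P, ∃ i, ∀ B ∈ Q.span, c B = i := by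
  classical
  induction s using Finset.induction_on generalizing P with
  | empty =>
    obtain ⟨B, hB⟩ := P.span_nonempty
    exact absurd (hP B hB) (Finset.notMem_empty _)
  | insert i s _ ih =>
    obtain ⟨Q, hQ, hQi | hQi⟩ := hc i P
    · exact ⟨Q, hQ, i, hQi⟩
    obtain ⟨Q', hQ', j, hj⟩ := ih Q fun B hB =>
      (Finset.mem_insert.mp (hP B (span_mono hQ hB))).resolve_left (disjoint_left.mp hQi hB)
    exact ⟨Q', hQ'.trans hQ, j, hj⟩

end DSubspace

theorem stmt14_general {d : ℕ} (Λ : Type) [Finite Λ] (V : Fin (d + 1) → TreeT)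
    (D : VecSub V)
    (r : ℕ) (hr : 0 < r) (c : (lpD D → Λ) → Fin r)
    (hc : ∀ γ : Fin r, SMeas (infTopD Λ D) {B | c B = γ})
    (F : DSubspace Λ D) :
    ∃ F' : DSubspace Λ D,
      spanD F' ⊆ spanD F ∧
      ∃ γ : Fin r, ∀ B ∈ spanD F', c B = γ := by
  rcases isEmpty_or_nonempty Λ with _ | _
  · exact ⟨F, subset_rfl, ⟨0, hr⟩, fun B ⟨_, ⟨a, _⟩, _⟩ =>
      isEmptyElim (a ⟨fun _ => [], fun i => (V i).root, fun _ => rfl⟩)⟩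
  have hdec : ∀ γ, F.Decides {B | c B = γ} := fun γ => hc γ _
    (fun _ => DSubspace.decides_of_isOpen) (fun _ => DSubspace.Decides.compl)
    (fun _ _ => DSubspace.Decides.union) (fun _ => DSubspace.Decides.souslin _)
  let P₀ : F.Condition := ⟨F.Q.D.lvlSet, fun _ => Classical.arbitrary Λ, subset_rfl, F.Q.dense.1⟩
  obtain ⟨P, -, γ, hP⟩ := P₀.exists_le_forall_span_eq hdec Finset.univ fun B _ => Finset.mem_univ _
  exact ⟨P.toDSubspace, (P.spanD_toDSubspace_subset).trans P.span_subset_spanD, γ,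
    fun B hB => hP B (P.spanD_toDSubspace_subset hB)⟩

/-- **Hales–Jewett for words indexed by a dense vector subset.** Let `D` be a dense
vector subset of `T`. For every finite Souslin measurable coloring of `W^∞(Λ,T,D)` (all
maps `⊗D → Λ`, with the product topology) and every subspace `F` of `W^∞(Λ,T,D)`, there
is a further subspace `F' ≤ F` with `[F']_Λ` monochromatic. -/
theorem stmt14 {d : ℕ} (Λ : Type) [Finite Λ] (V : Fin (d + 1) → TreeT)
    (D : VecSub V) (hD : D.IsDense)
    (r : ℕ) (hr : 0 < r) (c : (lpD D → Λ) → Fin r)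
    (hc : ∀ γ : Fin r, SMeas (infTopD Λ D) {B | c B = γ})
    (F : DSubspace Λ D) :
    ∃ F' : DSubspace Λ D,
      spanD F' ⊆ spanD F ∧
      ∃ γ : Fin r, ∀ B ∈ spanD F', c B = γ :=
  stmt14_general Λ V D r hr c hc F
end
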